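/- arXiv:2009.05776 — 13 statements merged into one kernel-verified Lean document; each statement's English description precedes it below -/
import Mathlib

section
/- In synchronous amnesiac flooding of a single message on a finite graph, every node is contained in at most two distinct round-sets; that is, for every node v the set of indices {i ∈ ℕ : v ∈ R i} has at most two elements. -/
open SimpleGraph

/-- Set of lengths of walks from `v` to some initial node, with parity `p`. -/
def WSet {V : Type*} (G : SimpleGraph V) (I : Set V) (v : V) (p : ℕ) : Set ℕ :=
  {n | (∃ u ∈ I, ∃ w : G.Walk v u, w.length = n) ∧ n % 2 = p % 2}

noncomputable def md {V : Type*} (G : SimpleGraph V) (I : Set V) (v : V) (p : ℕ) : ℕ :=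
  sInf (WSet G I v p)

lemma wset_congr {V : Type*} (G : SimpleGraph V) (I : Set V) (v : V) {p q : ℕ}
    (h : p % 2 = q % 2) : WSet G I v p = WSet G I v q := by
  ext n; unfold WSet; simp only [Set.mem_setOf_eq, h]

lemma md_congr {V : Type*} (G : SimpleGraph V) (I : Set V) (v : V) {p q : ℕ}
    (h : p % 2 = q % 2) : md G I v p = md G I v q := by
  unfold md; rw [wset_congr G I v h]

lemma md_le {V : Type*} {G : SimpleGraph V} {I : Set V} {v : V} {n p : ℕ}
    (hn : n ∈ WSet G I v p) : md G I v p ≤ n := Nat.sInf_le hn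

lemma md_mem {V : Type*} {G : SimpleGraph V} {I : Set V} {v : V} {n p : ℕ}
    (hn : n ∈ WSet G I v p) : md G I v p ∈ WSet G I v p := Nat.sInf_mem ⟨n, hn⟩

lemma mem_step {V : Type*} {G : SimpleGraph V} {I : Set V} {v u : V} {n p : ℕ}
    (hadj : G.Adj u v) (hn : n ∈ WSet G I v p) : n + 1 ∈ WSet G I u (p + 1) := by
  obtain ⟨⟨u₀, hu₀, w, hw⟩, hpar⟩ := hn
  exact ⟨⟨u₀, hu₀, Walk.cons hadj w, by simp [hw]⟩, by omega⟩

lemma key {V : Type*} (G : SimpleGraph V) (I : Set V)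
    (S : ℕ → V → V → Prop)
    (hS1 : ∀ g g' : V, S 1 g g' ↔ g ∈ I ∧ G.Adj g g')
    (hS : ∀ i : ℕ, 1 ≤ i → ∀ g g' : V,
      S (i + 1) g g' ↔ G.Adj g g' ∧ (∃ h, S i h g) ∧ ¬ S i g' g) :
    ∀ r : ℕ, 1 ≤ r →
      ((∀ u v, S r u v → r ∈ WSet G I v r ∧ md G I v r = r) ∧
       (∀ v u, (r - 1) ∈ WSet G I v (r - 1) → md G I v (r - 1) = r - 1 →
         G.Adj v u → r ∈ WSet G I u r → md G I u r = r → S r v u)) := by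
  intro r
  induction r using Nat.strong_induction_on with
  | _ r ih =>
    intro hr
    rcases r with _ | _ | i
    · exact absurd hr (by omega)
    · -- r = 1
      constructor
      · intro u v hSuv
        rw [hS1] at hSuv
        obtain ⟨hu, hadj⟩ := hSuv
        have hmem : 1 ∈ WSet G I v 1 :=
          ⟨⟨u, hu, Walk.cons hadj.symm Walk.nil, rfl⟩, rfl⟩
        refine ⟨hmem, ?_⟩
        have h1 : md G I v 1 ≤ 1 := md_le hmem
        have h2 : md G I v 1 % 2 = 1 % 2 := (md_mem hmem).2
        have h3 : md G I v 1 = 1 := by omega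
        exact h3
      · intro v u hmem hmd hadj hmemU hmdU
        obtain ⟨⟨u₀, hu₀, w, hw0⟩, -⟩ := hmem
        have hv : v = u₀ := Walk.eq_of_length_eq_zero hw0
        rw [hS1]
        exact ⟨by rwa [hv], hadj⟩
    · -- r = i + 2
      have hi1 : 1 ≤ i + 1 := by omega
      constructor
      · intro u v hSuv
        rw [hS (i + 1) hi1] at hSuv
        obtain ⟨hadj, ⟨h', hSh'u⟩, hnS⟩ := hSuv
        have hQ := (ih (i + 1) (by omega) hi1).1 h' u hSh'u
        have hmemv : (i + 2) ∈ WSet G I v (i + 2) := mem_step hadj.symm hQ.1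
        refine ⟨hmemv, ?_⟩
        have hkmem : md G I v (i + 2) ∈ WSet G I v (i + 2) := md_mem hmemv
        have hkle : md G I v (i + 2) ≤ i + 2 := md_le hmemv
        have hkpar : md G I v (i + 2) % 2 = (i + 2) % 2 := hkmem.2
        have hstep : md G I v (i + 2) + 1 ∈ WSet G I u (i + 2 + 1) := mem_step hadj hkmem
        have hstep' : md G I v (i + 2) + 1 ∈ WSet G I u (i + 1) := by
          rwa [wset_congr G I u (by omega : (i + 2 + 1) % 2 = (i + 1) % 2)] at hstep
        have hle2 : md G I u (i + 1) ≤ md G I v (i + 2) + 1 := md_le hstep'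
        rw [hQ.2] at hle2
        by_cases hki : md G I v (i + 2) = i + 2
        · exact hki
        · exfalso
          have hki' : md G I v (i + 2) = i := by omega
          have hmem' : i ∈ WSet G I v i := by
            have hmem2 := hkmem
            rw [hki'] at hmem2
            rwa [wset_congr G I v (by omega : (i + 2) % 2 = i % 2)] at hmem2
          have hmd' : md G I v i = i := by
            rw [← md_congr G I v (by omega : (i + 2) % 2 = i % 2)]
            exact hki'
          exact hnS ((ih (i + 1) (by omega) hi1).2 v u hmem' hmd' hadj.symm hQ.1 hQ.2)
      · intro v u hmem hmd hadj hmemU hmdU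
        simp only [Nat.add_sub_cancel] at hmem hmd
        rw [hS (i + 1) hi1]
        refine ⟨hadj, ?_, ?_⟩
        · -- exists predecessor of v
          obtain ⟨u₀, hu₀, w, hwlen⟩ := hmem.1
          cases w with
          | nil => exact absurd hwlen (by simp)
          | cons hvv' w' =>
            rename_i v'
            have hlen' : w'.length = i := by
              simp only [Walk.length_cons] at hwlen; omega
            have hmem' : i ∈ WSet G I v' i := ⟨⟨u₀, hu₀, w', hlen'⟩, rfl⟩
            have hle : md G I v' i ≤ i := md_le hmem'
            have hkmem : md G I v' i ∈ WSet G I v' i := md_mem hmem'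
            have hstep : md G I v' i + 1 ∈ WSet G I v (i + 1) := mem_step hvv' hkmem
            have hge : md G I v (i + 1) ≤ md G I v' i + 1 := md_le hstep
            rw [hmd] at hge
            have hmd' : md G I v' i = i := by omega
            exact ⟨v', (ih (i + 1) (by omega) hi1).2 v' v hmem' hmd' hvv'.symm hmem hmd⟩
        · -- ¬ S (i+1) u v
          intro hSuv
          rcases i with _ | j
          · rw [hS1] at hSuv
            have h0 : (0 : ℕ) ∈ WSet G I u 0 := ⟨⟨u, hSuv.1, Walk.nil, rfl⟩, rfl⟩
            have h1 : md G I u 0 ≤ 0 := md_le h0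
            have h2 : md G I u 0 = md G I u (0 + 1 + 1) := md_congr G I u (by omega)
            omega
          · rw [hS (j + 1) (by omega)] at hSuv
            obtain ⟨-, ⟨h', hS'⟩, -⟩ := hSuv
            have hQ := (ih (j + 1) (by omega) (by omega)).1 h' u hS'
            have h2 : md G I u (j + 1) = md G I u (j + 1 + 1 + 1) := md_congr G I u (by omega)
            rw [hQ.2] at h2
            omega

/-- Synchronous amnesiac flooding of a single message: every node belongs to
at most two distinct round-sets. -/
theorem amnesiac_flooding_at_most_two_roundsets
    {V : Type*} [Fintype V] (G : SimpleGraph V)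
    (I : Set V) (hI : I.Nonempty)
    (S : ℕ → V → V → Prop) (R : ℕ → Set V)
    (hS1 : ∀ g g' : V, S 1 g g' ↔ g ∈ I ∧ G.Adj g g')
    (hS : ∀ i : ℕ, 1 ≤ i → ∀ g g' : V,
      S (i + 1) g g' ↔ G.Adj g g' ∧ (∃ h, S i h g) ∧ ¬ S i g' g)
    (hR0 : R 0 = I)
    (hR : ∀ i : ℕ, 1 ≤ i → R i = {g : V | ∃ h, S i h g}) :
    ∀ v : V, {i : ℕ | v ∈ R i}.encard ≤ 2 := by
  classical
  intro v
  set a : ℕ := if v ∈ I then 0 else md G I v 0 with ha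
  have hsub : {i : ℕ | v ∈ R i} ⊆ {a, md G I v 1} := by
    intro i hi
    simp only [Set.mem_setOf_eq] at hi
    simp only [Set.mem_insert_iff, Set.mem_singleton_iff]
    rcases Nat.eq_zero_or_pos i with h0 | hpos
    · subst h0
      rw [hR0] at hi
      left
      simp [ha, hi]
    · rw [hR i hpos] at hi
      obtain ⟨u, hSuv⟩ := hi
      have hQ := ((key G I S hS1 hS i hpos).1 u v hSuv)
      rcases Nat.even_or_odd i with he | ho
      · have hpar : i % 2 = 0 := Nat.even_iff.mp he
        have hmd0 : md G I v 0 = i := by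
          rw [md_congr G I v (by omega : (0 : ℕ) % 2 = i % 2)]; exact hQ.2
        have hvI : v ∉ I := by
          intro hvi
          have h0 : (0 : ℕ) ∈ WSet G I v 0 := ⟨⟨v, hvi, Walk.nil, rfl⟩, rfl⟩
          have h1 : md G I v 0 ≤ 0 := md_le h0
          omega
        left
        simp [ha, hvI, hmd0]
      · have hpar : i % 2 = 1 := Nat.odd_iff.mp ho
        right
        rw [md_congr G I v (by omega : (1 : ℕ) % 2 = i % 2)]
        exact hQ.2.symm
  calc {i : ℕ | v ∈ R i}.encard ≤ ({a, md G I v 1} : Set ℕ).encard := Set.encard_mono hsub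
    _ ≤ ({md G I v 1} : Set ℕ).encard + 1 := Set.encard_insert_le _ _
    _ ≤ 2 := by rw [Set.encard_singleton]; exact le_of_eq one_add_one_eq_two
end

section
/- For every j ≥ 0, if g ∈ D j and g' ∈ D (j+1) are adjacent, then g sends the message to g' in round j+1 (i.e. S (j+1) g g' holds): all nodes at distance j from I send to all their neighbours at distance j+1 in round j+1. -/
/-- Lemma 3.2(ii): every node at distance `j` from `I` sends the message to
each of its neighbours at distance `j+1` from `I` in round `j+1`. -/
theorem amnesiac_flooding_sends_outward
    {V : Type*} [Fintype V] (G : SimpleGraph V) (hconn : G.Connected)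
    (I : Set V) (hI : I.Nonempty)
    (S : ℕ → V → V → Prop) (R : ℕ → Set V) (dI : V → ℕ)
    (hS1 : ∀ g g' : V, S 1 g g' ↔ g ∈ I ∧ G.Adj g g')
    (hS : ∀ i : ℕ, 1 ≤ i → ∀ g g' : V,
      S (i + 1) g g' ↔ G.Adj g g' ∧ (∃ h, S i h g) ∧ ¬ S i g' g)
    (hR0 : R 0 = I)
    (hR : ∀ i : ℕ, 1 ≤ i → R i = {g : V | ∃ h, S i h g})
    (hdI : ∀ g : V, dI g = sInf {n : ℕ | ∃ g0 ∈ I, G.dist g0 g = n}) :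
    ∀ (j : ℕ) (g g' : V), dI g = j → dI g' = j + 1 → G.Adj g g' →
      S (j + 1) g g' := by
  have hset : ∀ g : V, {n : ℕ | ∃ g0 ∈ I, G.dist g0 g = n}.Nonempty := by
    intro g; obtain ⟨g0, hg0⟩ := hI; exact ⟨G.dist g0 g, g0, hg0, rfl⟩
  have hex : ∀ g : V, ∃ g0 ∈ I, G.dist g0 g = dI g := by
    intro g; rw [hdI]; exact Nat.sInf_mem (hset g)
  have hle : ∀ g : V, ∀ g0 ∈ I, dI g ≤ G.dist g0 g := by
    intro g g0 h0; rw [hdI]; exact Nat.sInf_le ⟨g0, h0, rfl⟩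
  have hadj_le : ∀ a b : V, G.Adj a b → dI b ≤ dI a + 1 := by
    intro a b hab
    obtain ⟨g0, hg0, hd⟩ := hex a
    calc dI b ≤ G.dist g0 b := hle b g0 hg0
      _ ≤ G.dist g0 a + G.dist a b := hconn.dist_triangle
      _ ≤ dI a + 1 := by
          rw [hd]
          have h1 : G.dist a b ≤ 1 := by
            simpa using SimpleGraph.dist_le hab.toWalk
          omega
  -- any sender in round i has distance ≤ i - 1
  have hSadj : ∀ i : ℕ, 1 ≤ i → ∀ a b : V, S i a b → G.Adj a b := by
    intro i hi a b hab
    rcases Nat.exists_eq_add_of_le hi with ⟨k, rfl⟩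
    rcases Nat.eq_zero_or_pos k with hk | hk
    · subst hk; exact ((hS1 a b).mp hab).2
    · have := (hS (k) (by omega) a b)
      rw [show 1 + k = k + 1 by omega] at hab
      exact (this.mp hab).1
  have hsend : ∀ i : ℕ, 1 ≤ i → ∀ a b : V, S i a b → dI a + 1 ≤ i := by
    intro i
    induction i with
    | zero => omega
    | succ n ih =>
      intro _ a b hab
      rcases Nat.eq_zero_or_pos n with hn | hn
      · subst hn
        have haI : a ∈ I := ((hS1 a b).mp hab).1
        have : dI a ≤ G.dist a a := hle a a haI
        simp [SimpleGraph.dist_self] at this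
        omega
      · obtain ⟨h, hh⟩ := ((hS n hn a b).mp hab).2.1
        have h1 := ih hn h a hh
        have h2 := hadj_le h a (hSadj n hn h a hh)
        omega
  intro j
  induction j with
  | zero =>
    intro g g' hg hg' hadj
    obtain ⟨g0, hg0, hd⟩ := hex g
    rw [hg] at hd
    have heq : g0 = g := (hconn.dist_eq_zero_iff).mp hd
    exact (hS1 g g').mpr ⟨heq ▸ hg0, hadj⟩
  | succ n ih =>
    intro g g' hg hg' hadj
    rw [hS (n + 1) (by omega)]
    refine ⟨hadj, ?_, ?_⟩
    · -- find a neighbour h of g at distance n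
      obtain ⟨g0, hg0, hd⟩ := hex g
      obtain ⟨p, hp⟩ := hconn.exists_walk_length_eq_dist g0 g
      rw [hd, hg] at hp
      have hq : p.reverse.length = n + 1 := by
        rw [SimpleGraph.Walk.length_reverse]; exact hp
      cases hq2 : p.reverse with
      | nil => rw [hq2] at hq; simp at hq
      | cons hadj' q =>
        rename_i h
        rw [hq2] at hq
        simp [SimpleGraph.Walk.length_cons] at hq
        have hdh : dI h ≤ n := by
          calc dI h ≤ G.dist g0 h := hle h g0 hg0
            _ ≤ q.reverse.length := SimpleGraph.dist_le _
            _ = n := by rw [SimpleGraph.Walk.length_reverse]; exact hq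
        have hge : n ≤ dI h := by
          have := hadj_le h g hadj'.symm
          omega
        have hh : dI h = n := le_antisymm hdh hge
        exact ⟨h, ih h g hh hg hadj'.symm⟩
    · intro hcon
      have := hsend (n + 1) (by omega) g' g hcon
      omega
end

section
/- If j ≥ 0 and g ∈ D j is an equidistantly-connected (ec) node, then g belongs to the round-set R (j+1) for the second time, i.e. g ∈ R (j+1) and g ∈ R i for exactly one earlier index i with 0 ≤ i < j+1. -/
/-- Lemma 3.2(iii): if `g` is at distance `j` from `I` and is an
equidistantly-connected (ec) node, then `g` belongs to round-set `R (j+1)`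
for the second time: `g ∈ R (j+1)` and there is exactly one earlier index
`i < j+1` with `g ∈ R i`. -/
theorem amnesiac_flooding_ec_second_time
    {V : Type*} [Fintype V] (G : SimpleGraph V) (hconn : G.Connected)
    (I : Set V) (hI : I.Nonempty)
    (S : ℕ → V → V → Prop) (R : ℕ → Set V) (dI : V → ℕ)
    (hS1 : ∀ g g' : V, S 1 g g' ↔ g ∈ I ∧ G.Adj g g')
    (hS : ∀ i : ℕ, 1 ≤ i → ∀ g g' : V,
      S (i + 1) g g' ↔ G.Adj g g' ∧ (∃ h, S i h g) ∧ ¬ S i g' g)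
    (hR0 : R 0 = I)
    (hR : ∀ i : ℕ, 1 ≤ i → R i = {g : V | ∃ h, S i h g})
    (hdI : ∀ g : V, dI g = sInf {n : ℕ | ∃ g0 ∈ I, G.dist g0 g = n}) :
    ∀ (j : ℕ) (g : V), dI g = j →
      (∃ g' : V, G.Adj g g' ∧ dI g' = dI g) →
      g ∈ R (j + 1) ∧ (∃! i : ℕ, i < j + 1 ∧ g ∈ R i) := by
  -- basic facts about dI
  have hne : ∀ g : V, {n : ℕ | ∃ g0 ∈ I, G.dist g0 g = n}.Nonempty := by
    intro g
    obtain ⟨g0, hg0⟩ := hI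
    exact ⟨G.dist g0 g, g0, hg0, rfl⟩
  have hmem : ∀ g : V, ∃ g0 ∈ I, G.dist g0 g = dI g := by
    intro g
    rw [hdI]
    exact Nat.sInf_mem (hne g)
  have hle : ∀ g : V, ∀ g0 ∈ I, dI g ≤ G.dist g0 g := by
    intro g g0 h0
    rw [hdI]
    exact Nat.sInf_le ⟨g0, h0, rfl⟩
  have hdI0 : ∀ g ∈ I, dI g = 0 := by
    intro g hg
    have := hle g g hg
    simpa [SimpleGraph.dist_self] using this
  have hI0 : ∀ g : V, dI g = 0 → g ∈ I := by
    intro g hg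
    obtain ⟨g0, hg0, hd⟩ := hmem g
    rw [hg] at hd
    have : g0 = g := (hconn.dist_eq_zero_iff).mp hd
    exact this ▸ hg0
  -- triangle inequality along an edge
  have htri : ∀ g h : V, G.Adj h g → dI g ≤ dI h + 1 := by
    intro g h hadj
    obtain ⟨g0, hg0, hd⟩ := hmem h
    have h1 : G.dist h g ≤ 1 := by
      have := SimpleGraph.dist_le (SimpleGraph.Walk.cons hadj SimpleGraph.Walk.nil)
      simpa using this
    calc dI g ≤ G.dist g0 g := hle g g0 hg0
      _ ≤ G.dist g0 h + G.dist h g := hconn.dist_triangle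
      _ ≤ dI h + 1 := by omega
  -- any node receiving in round i is within distance i of I
  have inv1 : ∀ i : ℕ, 1 ≤ i → ∀ h g : V, S i h g → dI g ≤ i := by
    intro i hi
    induction i, hi using Nat.le_induction with
    | base =>
      intro h g hs
      rw [hS1] at hs
      have := htri g h hs.2
      have := hdI0 h hs.1
      omega
    | succ i hi ih =>
      intro h g hs
      rw [hS i hi] at hs
      obtain ⟨hadj, ⟨k, hk⟩, -⟩ := hs
      have := htri g h hadj
      have := ih k h hk
      omega
  -- any sender in round i is at distance < i from I
  have hsender : ∀ i : ℕ, 1 ≤ i → ∀ b a : V, S i b a → dI b < i := by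
    intro i hi b a hs
    match i, hi with
    | 1, _ =>
      rw [hS1] at hs
      have := hdI0 b hs.1
      omega
    | (k + 2), _ =>
      rw [hS (k + 1) (by omega)] at hs
      obtain ⟨-, ⟨h, hh⟩, -⟩ := hs
      have := inv1 (k + 1) (by omega) h b hh
      omega
  -- every node at distance i ≥ 1 receives in round i
  have inv2 : ∀ i : ℕ, 1 ≤ i → ∀ g : V, dI g = i → ∃ h, S i h g := by
    intro i hi
    induction i, hi using Nat.le_induction with
    | base =>
      intro g hg
      obtain ⟨g0, hg0, hd⟩ := hmem g
      rw [hg] at hd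
      have hadj : G.Adj g0 g := SimpleGraph.dist_eq_one_iff_adj.mp hd
      exact ⟨g0, (hS1 g0 g).mpr ⟨hg0, hadj⟩⟩
    | succ i hi ih =>
      intro g hg
      obtain ⟨g0, hg0, hd⟩ := hmem g
      rw [hg] at hd
      obtain ⟨p, hp⟩ := (hconn g0 g).exists_walk_length_eq_dist
      rw [hd] at hp
      have hgne : g ≠ g0 := by
        intro h
        have := hdI0 g (h ▸ hg0)
        omega
      obtain ⟨x, hgx, q, hq⟩ := (p.reverse).exists_eq_cons_of_ne hgne
      have hqlen : q.length = i := by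
        have : p.reverse.length = i + 1 := by rw [SimpleGraph.Walk.length_reverse, hp]
        rw [hq] at this
        simpa using this
      have hxle : dI x ≤ i := by
        have h1 : G.dist x g0 ≤ i := hqlen ▸ SimpleGraph.dist_le q
        calc dI x ≤ G.dist g0 x := hle x g0 hg0
          _ = G.dist x g0 := SimpleGraph.dist_comm
          _ ≤ i := h1
      have hxge : dI g ≤ dI x + 1 := htri g x hgx.symm
      have hx : dI x = i := by omega
      obtain ⟨k, hk⟩ := ih x hx
      refine ⟨x, (hS i hi x g).mpr ⟨hgx.symm, ⟨k, hk⟩, ?_⟩⟩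
      intro hc
      have := hsender i hi g x hc
      omega
  -- main proof
  intro j g hjg hec
  obtain ⟨g', hadj, hdg'⟩ := hec
  rw [hjg] at hdg'
  rcases Nat.eq_zero_or_pos j with hj0 | hj
  · subst hj0
    have hgI : g ∈ I := hI0 g hjg
    have hg'I : g' ∈ I := hI0 g' hdg'
    constructor
    · rw [hR 1 le_rfl]
      exact ⟨g', (hS1 g' g).mpr ⟨hg'I, hadj.symm⟩⟩
    · refine ⟨0, ⟨by omega, by rw [hR0]; exact hgI⟩, ?_⟩
      intro i ⟨hi, _⟩
      omega
  · have hgj : ∃ h, S j h g := inv2 j hj g hjg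
    have hg'j : ∃ h, S j h g' := inv2 j hj g' hdg'
    constructor
    · rw [hR (j + 1) (by omega)]
      refine ⟨g', (hS j hj g' g).mpr ⟨hadj.symm, hg'j, ?_⟩⟩
      intro hc
      have := hsender j hj g g' hc
      omega
    · refine ⟨j, ⟨by omega, by rw [hR j hj]; exact hgj⟩, ?_⟩
      intro i ⟨hi, hgRi⟩
      rcases Nat.eq_zero_or_pos i with h0 | h1
      · subst h0
        rw [hR0] at hgRi
        have := hdI0 g hgRi
        omega
      · rw [hR i h1] at hgRi
        obtain ⟨h, hh⟩ := hgRi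
        have := inv1 i h1 h g hh
        omega
end

section
/- G has an ec node if and only if some node of G belongs to two distinct round-sets, i.e. there exist a node g and indices i < j with g ∈ R i and g ∈ R j. -/
/-- Lemma 3.3: `G` has an ec node if and only if some node of `G` belongs to
two distinct round-sets. -/
theorem amnesiac_flooding_ec_iff_two_roundsets
    {V : Type*} [Fintype V] (G : SimpleGraph V) (hconn : G.Connected)
    (I : Set V) (hI : I.Nonempty)
    (S : ℕ → V → V → Prop) (R : ℕ → Set V) (dI : V → ℕ)
    (hS1 : ∀ g g' : V, S 1 g g' ↔ g ∈ I ∧ G.Adj g g')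
    (hS : ∀ i : ℕ, 1 ≤ i → ∀ g g' : V,
      S (i + 1) g g' ↔ G.Adj g g' ∧ (∃ h, S i h g) ∧ ¬ S i g' g)
    (hR0 : R 0 = I)
    (hR : ∀ i : ℕ, 1 ≤ i → R i = {g : V | ∃ h, S i h g})
    (hdI : ∀ g : V, dI g = sInf {n : ℕ | ∃ g0 ∈ I, G.dist g0 g = n}) :
    (∃ g g' : V, G.Adj g g' ∧ dI g' = dI g) ↔
      (∃ (g : V) (i j : ℕ), i < j ∧ g ∈ R i ∧ g ∈ R j) := by
  classical
  -- Basic facts about the distance-to-`I` function `dI`.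
  have hne : ∀ g : V, {n : ℕ | ∃ g0 ∈ I, G.dist g0 g = n}.Nonempty := by
    intro g; obtain ⟨g0, hg0⟩ := hI; exact ⟨_, g0, hg0, rfl⟩
  have hdIle : ∀ g g0 : V, g0 ∈ I → dI g ≤ G.dist g0 g := by
    intro g g0 h; rw [hdI]; exact Nat.sInf_le ⟨g0, h, rfl⟩
  have hdI_mem : ∀ g : V, ∃ g0 ∈ I, G.dist g0 g = dI g := by
    intro g
    have := Nat.sInf_mem (hne g)
    rw [← hdI] at this
    exact this
  have hdI0 : ∀ g : V, dI g = 0 ↔ g ∈ I := by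
    intro g
    constructor
    · intro h
      obtain ⟨g0, hg0, hd⟩ := hdI_mem g
      rw [h] at hd
      rw [hconn.dist_eq_zero_iff] at hd
      rwa [← hd]
    · intro h
      have h2 := hdIle g g h
      rw [SimpleGraph.dist_self] at h2
      omega
  -- adjacency changes dI by at most one
  have hadj1 : ∀ a b : V, G.Adj a b → dI b ≤ dI a + 1 := by
    intro a b hab
    obtain ⟨g0, hg0, hd⟩ := hdI_mem a
    have h1 : G.dist a b = 1 := SimpleGraph.dist_eq_one_iff_adj.mpr hab
    have := hconn.dist_triangle (u := g0) (v := a) (w := b)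
    rw [h1, hd] at this
    exact le_trans (hdIle b g0 hg0) this
  -- a vertex at distance k+1 has a neighbour at distance k
  have hnbr : ∀ (k : ℕ) (g : V), dI g = k + 1 → ∃ h, G.Adj h g ∧ dI h = k := by
    intro k g hg
    obtain ⟨g0, hg0, hd⟩ := hdI_mem g
    rw [hg] at hd
    have hdne : G.dist g0 g ≠ 0 := by omega
    obtain ⟨p, hp⟩ := SimpleGraph.exists_walk_of_dist_ne_zero hdne
    rw [hd] at hp
    -- look at the penultimate vertex of p via the reversed walk
    have hp' : p.reverse.length = k + 1 := by rw [SimpleGraph.Walk.length_reverse]; exact hp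
    have hnil : ¬ p.reverse.Nil := by
      intro hn
      rw [SimpleGraph.Walk.nil_iff_length_eq] at hn
      omega
    set b := p.reverse.getVert 1 with hb
    have hadjb : G.Adj g b := p.reverse.adj_snd hnil
    have htl : p.reverse.tail.length + 1 = p.reverse.length :=
      SimpleGraph.Walk.length_tail_add_one hnil
    have hdb : G.dist g0 b ≤ k := by
      rw [SimpleGraph.dist_comm]
      exact le_trans (SimpleGraph.dist_le p.reverse.tail) (by omega)
    have hb1 : dI b ≤ k := le_trans (hdIle b g0 hg0) hdb
    have hb2 : k ≤ dI b := by
      have := hadj1 b g hadjb.symm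
      omega
    exact ⟨b, hadjb.symm, by omega⟩
  -- Fact A: if `S i a b` (i ≥ 1) then `dI a ≤ i - 1` and `dI b ≤ i`.
  have factA : ∀ (i : ℕ) (a b : V), S (i + 1) a b → dI a ≤ i ∧ dI b ≤ i + 1 := by
    intro i
    induction i with
    | zero =>
      intro a b hsab
      rw [hS1] at hsab
      have ha : dI a = 0 := (hdI0 a).mpr hsab.1
      have := hadj1 a b hsab.2
      omega
    | succ n ih =>
      intro a b hsab
      rw [hS n.succ (by omega)] at hsab
      obtain ⟨hab, ⟨h, hsha⟩, -⟩ := hsab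
      have := (ih h a hsha).2
      have := hadj1 a b hab
      omega
  -- Fact B: every vertex at distance k+1 receives the message in round k+1.
  have factB : ∀ (k : ℕ) (g : V), dI g = k + 1 → ∃ h, S (k + 1) h g := by
    intro k
    induction k with
    | zero =>
      intro g hg
      obtain ⟨h, hadj, hh⟩ := hnbr 0 g hg
      exact ⟨h, (hS1 h g).mpr ⟨(hdI0 h).mp hh, hadj⟩⟩
    | succ n ih =>
      intro g hg
      obtain ⟨h, hadj, hh⟩ := hnbr (n + 1) g hg
      obtain ⟨h', hs⟩ := ih h hh
      refine ⟨h, (hS (n + 1) (by omega) h g).mpr ⟨hadj, ⟨h', hs⟩, ?_⟩⟩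
      intro hcon
      rcases n with - | m
      · rw [hS1] at hcon
        have : dI g = 0 := (hdI0 g).mpr hcon.1
        omega
      · have := (factA (m + 1) g h hcon).1
        omega
  constructor
  · -- ec node ⇒ double membership
    rintro ⟨g, g', hadj, heq⟩
    rcases hk : dI g with - | m
    · -- both in I : g receives in round 1 from g'
      have hgI : g ∈ I := (hdI0 g).mp hk
      have hg'I : g' ∈ I := (hdI0 g').mp (by omega)
      refine ⟨g, 0, 1, by omega, by rw [hR0]; exact hgI, ?_⟩
      rw [hR 1 le_rfl]
      exact ⟨g', (hS1 g' g).mpr ⟨hg'I, hadj.symm⟩⟩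
    · -- both at distance m+1 : g' receives in rounds m+1 and m+2
      have hk' : dI g' = m + 1 := by omega
      obtain ⟨h, hs⟩ := factB m g hk
      obtain ⟨h', hs'⟩ := factB m g' hk'
      refine ⟨g', m + 1, m + 2, by omega, ?_, ?_⟩
      · rw [hR (m + 1) (by omega)]; exact ⟨h', hs'⟩
      · rw [hR (m + 2) (by omega)]
        refine ⟨g, (hS (m + 1) (by omega) g g').mpr ⟨hadj, ⟨h, hs⟩, ?_⟩⟩
        intro hcon
        rcases m with - | m'
        · rw [hS1] at hcon
          have : dI g' = 0 := (hdI0 g').mpr hcon.1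
          omega
        · have := (factA (m' + 1) g' g hcon).1
          omega
  · -- double membership ⇒ ec node (contrapositive)
    intro ⟨g, i, j, hij, hgi, hgj⟩
    by_contra hec
    push_neg at hec
    -- no ec node: adjacent vertices have distances differing by exactly one
    have hstep : ∀ a b : V, G.Adj a b → dI b = dI a + 1 ∨ dI a = dI b + 1 := by
      intro a b hab
      have h1 := hadj1 a b hab
      have h2 := hadj1 b a hab.symm
      have h3 := hec a b hab
      omega
    -- characterisation of S in the no-ec case
    have charS : ∀ (i : ℕ) (a b : V),
        S (i + 1) a b ↔ G.Adj a b ∧ dI a = i ∧ dI b = i + 1 := by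
      intro i
      induction i with
      | zero =>
        intro a b
        rw [hS1]
        constructor
        · rintro ⟨haI, hab⟩
          have ha : dI a = 0 := (hdI0 a).mpr haI
          have := hstep a b hab
          exact ⟨hab, ha, by omega⟩
        · rintro ⟨hab, ha, -⟩
          exact ⟨(hdI0 a).mp ha, hab⟩
      | succ n ih =>
        intro a b
        rw [hS (n + 1) (by omega)]
        constructor
        · rintro ⟨hab, ⟨h, hsha⟩, hnba⟩
          have ha : dI a = n + 1 := ((ih h a).mp hsha).2.2
          have hbne : dI b ≠ n := by
            intro hb
            exact hnba ((ih b a).mpr ⟨hab.symm, hb, ha⟩)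
          have := hstep a b hab
          exact ⟨hab, ha, by omega⟩
        · rintro ⟨hab, ha, hb⟩
          obtain ⟨h, hha, hh⟩ := hnbr n a ha
          refine ⟨hab, ⟨h, (ih h a).mpr ⟨hha, hh, ha⟩⟩, ?_⟩
          intro hcon
          have := ((ih b a).mp hcon).2.1
          omega
    -- characterisation of the round sets
    have charR : ∀ (i : ℕ) (g : V), g ∈ R i ↔ dI g = i := by
      intro i g
      rcases i with - | m
      · rw [hR0]; exact ((hdI0 g).symm)
      · rw [hR (m + 1) (by omega)]
        constructor
        · rintro ⟨h, hs⟩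
          exact ((charS m h g).mp hs).2.2
        · intro hg
          obtain ⟨h, hha, hh⟩ := hnbr m g hg
          exact ⟨h, (charS m h g).mpr ⟨hha, hh, hg⟩⟩
    have h1 := (charR i g).mp hgi
    have h2 := (charR j g).mp hgj
    omega
end

section
/- Flooding terminates after round e(I) (i.e. R i = ∅ for all i > e(I)) if and only if G is ec-bipartite. -/
open SimpleGraph

namespace AmnesiacFloodingAux

variable {V : Type*} {G : SimpleGraph V} {I : Set V}
  {S : ℕ → V → V → Prop} {dI : V → ℕ}

/-- There is a walk of length exactly `t` from some initial node to `u`. -/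
def Wk (G : SimpleGraph V) (I : Set V) (t : ℕ) (u : V) : Prop :=
  ∃ g0 ∈ I, ∃ p : G.Walk g0 u, p.length = t

lemma dI_exists (hI : I.Nonempty)
    (hdI : ∀ g : V, dI g = sInf {n : ℕ | ∃ g0 ∈ I, G.dist g0 g = n})
    (g : V) : ∃ g0 ∈ I, G.dist g0 g = dI g := by
  rw [hdI]
  have hne : ({n : ℕ | ∃ g0 ∈ I, G.dist g0 g = n}).Nonempty :=
    ⟨G.dist hI.choose g, hI.choose, hI.choose_spec, rfl⟩
  exact Nat.sInf_mem hne

lemma dI_le (hdI : ∀ g : V, dI g = sInf {n : ℕ | ∃ g0 ∈ I, G.dist g0 g = n})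
    {g0 : V} (hg0 : g0 ∈ I) (g : V) : dI g ≤ G.dist g0 g := by
  rw [hdI]; exact Nat.sInf_le ⟨g0, hg0, rfl⟩

lemma dI_le_walk (hdI : ∀ g : V, dI g = sInf {n : ℕ | ∃ g0 ∈ I, G.dist g0 g = n})
    {g0 : V} (hg0 : g0 ∈ I) {g : V} (p : G.Walk g0 g) :
    dI g ≤ p.length :=
  le_trans (dI_le hdI hg0 g) (SimpleGraph.dist_le p)

lemma dI_of_mem (hdI : ∀ g : V, dI g = sInf {n : ℕ | ∃ g0 ∈ I, G.dist g0 g = n})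
    {g : V} (hg : g ∈ I) : dI g = 0 :=
  Nat.le_antisymm (by simpa [SimpleGraph.dist_self] using dI_le hdI hg g) (Nat.zero_le _)

lemma mem_of_dI_zero (hconn : G.Connected) (hI : I.Nonempty)
    (hdI : ∀ g : V, dI g = sInf {n : ℕ | ∃ g0 ∈ I, G.dist g0 g = n})
    {g : V} (hg : dI g = 0) : g ∈ I := by
  obtain ⟨g0, hg0, hd⟩ := dI_exists hI hdI g
  rw [hg] at hd
  have : g0 = g := ((hconn g0 g).dist_eq_zero_iff).mp hd
  exact this ▸ hg0

lemma dI_adj_le (hconn : G.Connected) (hI : I.Nonempty)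
    (hdI : ∀ g : V, dI g = sInf {n : ℕ | ∃ g0 ∈ I, G.dist g0 g = n})
    {g g' : V} (h : G.Adj g g') : dI g' ≤ dI g + 1 := by
  obtain ⟨g0, hg0, hd⟩ := dI_exists hI hdI g
  obtain ⟨p, hp⟩ := (hconn g0 g).exists_walk_length_eq_dist
  have := dI_le_walk hdI hg0 (p.concat h)
  rwa [SimpleGraph.Walk.length_concat, hp, hd] at this

lemma dI_pred (hconn : G.Connected) (hI : I.Nonempty)
    (hdI : ∀ g : V, dI g = sInf {n : ℕ | ∃ g0 ∈ I, G.dist g0 g = n})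
    {g : V} (hg : 1 ≤ dI g) : ∃ h, G.Adj h g ∧ dI h + 1 = dI g := by
  obtain ⟨g0, hg0, hd⟩ := dI_exists hI hdI g
  obtain ⟨p, hp⟩ := (hconn g0 g).exists_walk_length_eq_dist
  have hlen : p.length = dI g := by rw [hp, hd]
  have hnil : ¬ p.reverse.Nil := by
    rw [SimpleGraph.Walk.nil_iff_length_eq, SimpleGraph.Walk.length_reverse, hlen]
    omega
  obtain ⟨x, hadj, q, hq⟩ := SimpleGraph.Walk.not_nil_iff.mp hnil
  have hqlen : q.length + 1 = dI g := by
    have := congrArg SimpleGraph.Walk.length hq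
    rw [SimpleGraph.Walk.length_reverse, hlen] at this
    simpa using this.symm
  refine ⟨x, hadj.symm, ?_⟩
  have h1 : dI x ≤ q.length := by
    have := dI_le_walk hdI hg0 q.reverse
    rwa [SimpleGraph.Walk.length_reverse] at this
  have h2 : dI g ≤ dI x + 1 := dI_adj_le hconn hI hdI hadj.symm
  omega

section SLemmas

variable (hconn : G.Connected) (hI : I.Nonempty)
  (hS1 : ∀ g g' : V, S 1 g g' ↔ g ∈ I ∧ G.Adj g g')
  (hS : ∀ i : ℕ, 1 ≤ i → ∀ g g' : V,
    S (i + 1) g g' ↔ G.Adj g g' ∧ (∃ h, S i h g) ∧ ¬ S i g' g)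
  (hdI : ∀ g : V, dI g = sInf {n : ℕ | ∃ g0 ∈ I, G.dist g0 g = n})

include hconn hI hS1 hS hdI

/-- Lemma C: a sender in round `j` is at level ≤ `j-1`, and a receiver at level ≤ `j`. -/
lemma lemC : ∀ j, 1 ≤ j → ∀ h u : V, S j h u → dI h + 1 ≤ j ∧ dI u ≤ j := by
  intro j hj
  induction j, hj using Nat.le_induction with
  | base =>
    intro h u hS'
    obtain ⟨hmem, hadj⟩ := (hS1 h u).mp hS'
    have h0 : dI h = 0 := dI_of_mem hdI hmem
    have h1 : dI u ≤ dI h + 1 := dI_adj_le hconn hI hdI hadj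
    omega
  | succ j hj ih =>
    intro h u hS'
    obtain ⟨hadj, ⟨h', hh'⟩, -⟩ := (hS j hj h u).mp hS'
    have := ih h' h hh'
    have h1 : dI u ≤ dI h + 1 := dI_adj_le hconn hI hdI hadj
    omega

/-- Lemma K1: a message received in round `t` has travelled along a walk of length `t`. -/
lemma lemK1 : ∀ t, 1 ≤ t → ∀ h u : V, S t h u → Wk G I t u := by
  intro t ht
  induction t, ht using Nat.le_induction with
  | base =>
    intro h u hS'
    obtain ⟨hmem, hadj⟩ := (hS1 h u).mp hS'
    exact ⟨h, hmem, SimpleGraph.Walk.cons hadj SimpleGraph.Walk.nil, rfl⟩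
  | succ t ht ih =>
    intro h u hS'
    obtain ⟨hadj, ⟨h', hh'⟩, -⟩ := (hS t ht h u).mp hS'
    obtain ⟨g0, hg0, p, hp⟩ := ih h' h hh'
    exact ⟨g0, hg0, p.concat hadj, by rw [SimpleGraph.Walk.length_concat, hp]⟩

/-- Lemma B: every node at level `m ≥ 1` receives the message in round `m`. -/
lemma lemB : ∀ m, 1 ≤ m → ∀ u : V, dI u = m → ∃ h, S m h u := by
  intro m
  induction m using Nat.strong_induction_on with
  | _ m ih =>
    intro hm u hu
    obtain ⟨h, hadj, hh⟩ := dI_pred hconn hI hdI (hu ▸ hm)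
    rcases Nat.eq_or_lt_of_le hm with h1 | h2
    · -- m = 1
      rw [← h1]
      exact ⟨h, (hS1 h u).mpr ⟨mem_of_dI_zero hconn hI hdI (by omega), hadj⟩⟩
    · -- m ≥ 2
      have hm1 : 1 ≤ m - 1 := by omega
      have hdh : dI h = m - 1 := by omega
      obtain ⟨h', hh'⟩ := ih (m - 1) (by omega) hm1 h hdh
      refine ⟨h, ?_⟩
      have hrw : m - 1 + 1 = m := by omega
      rw [← hrw]
      refine (hS (m - 1) hm1 h u).mpr ⟨hadj, ⟨h', hh'⟩, ?_⟩
      intro hcon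
      have := (lemC hconn hI hS1 hS hdI (m - 1) hm1 u h hcon).1
      omega

/-- Lemma A: if there are no ec nodes, a node receiving in round `i` is at level `i`. -/
lemma lemA (hec : ¬ ∃ g g' : V, G.Adj g g' ∧ dI g' = dI g) :
    ∀ i, 1 ≤ i → ∀ h u : V, S i h u → dI u = i := by
  intro i
  induction i using Nat.strong_induction_on with
  | _ i ih =>
    intro hi h u hS'
    rcases Nat.eq_or_lt_of_le hi with h1 | h2
    · -- i = 1
      subst h1
      obtain ⟨hmem, hadj⟩ := (hS1 h u).mp hS'
      have h0 : dI h = 0 := dI_of_mem hdI hmem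
      have h1 : dI u ≤ 1 := by have := dI_adj_le hconn hI hdI hadj; omega
      have h2 : dI u ≠ 0 := fun hc => hec ⟨h, u, hadj, by omega⟩
      omega
    · -- i = j+1 with j ≥ 1
      obtain ⟨j, rfl⟩ : ∃ j, i = j + 1 := ⟨i - 1, by omega⟩
      have hj : 1 ≤ j := by omega
      obtain ⟨hadj, ⟨h', hh'⟩, hnb⟩ := (hS j hj h u).mp hS'
      have hdh : dI h = j := ih j (by omega) hj h' h hh'
      have hub : dI u ≤ j + 1 := by have := dI_adj_le hconn hI hdI hadj; omega
      have hlb : j ≤ dI u + 1 := by have := dI_adj_le hconn hI hdI hadj.symm; omega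
      have hne : dI u ≠ j := fun hc => hec ⟨h, u, hadj, by omega⟩
      -- rule out dI u = j - 1
      have hne' : dI u ≠ j - 1 := by
        intro hc
        apply hnb
        rcases Nat.eq_or_lt_of_le hj with hj1 | hj2
        · -- j = 1, dI u = 0, so u ∈ I
          have hu0 : dI u = 0 := by omega
          have humem : u ∈ I := mem_of_dI_zero hconn hI hdI hu0
          rw [← hj1]
          exact (hS1 u h).mpr ⟨humem, hadj.symm⟩
        · -- j ≥ 2
          have hj1 : 1 ≤ j - 1 := by omega
          have hdu : dI u = j - 1 := hc
          obtain ⟨h'', hh''⟩ := lemB hconn hI hS1 hS hdI (j - 1) hj1 u hdu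
          have hrw : j - 1 + 1 = j := by omega
          rw [← hrw]
          refine (hS (j - 1) hj1 u h).mpr ⟨hadj.symm, ⟨h'', hh''⟩, ?_⟩
          intro hcon
          have := (lemC hconn hI hS1 hS hdI (j - 1) hj1 h u hcon).1
          omega
      omega

/-- Lemma K2: if `t ≥ 1` is the minimal length of its parity of a walk from `I` to `u`,
then `u` receives the message in round `t`. -/
lemma lemK2 : ∀ t, 1 ≤ t → ∀ u : V, Wk G I t u →
    (∀ s, s % 2 = t % 2 → s < t → ¬ Wk G I s u) → ∃ h, S t h u := by
  intro t
  induction t using Nat.strong_induction_on with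
  | _ t ih =>
    intro ht u hW hmin
    obtain ⟨g0, hg0, p, hp⟩ := hW
    have hnil : ¬ p.reverse.Nil := by
      rw [SimpleGraph.Walk.nil_iff_length_eq, SimpleGraph.Walk.length_reverse, hp]
      omega
    obtain ⟨x, hadj, q, hq⟩ := SimpleGraph.Walk.not_nil_iff.mp hnil
    have hqlen : q.length + 1 = t := by
      have := congrArg SimpleGraph.Walk.length hq
      rw [SimpleGraph.Walk.length_reverse, hp] at this
      simpa using this.symm
    have hadj' : G.Adj x u := hadj.symm
    rcases Nat.eq_or_lt_of_le ht with h1 | h2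
    · -- t = 1 : x = g0 ∈ I
      have hx : x = g0 := SimpleGraph.Walk.eq_of_length_eq_zero (p := q) (by omega)
      refine ⟨x, ?_⟩
      rw [← h1]
      exact (hS1 x u).mpr ⟨hx ▸ hg0, hadj'⟩
    · -- t ≥ 2
      have ht1 : 1 ≤ t - 1 := by omega
      have hWx : Wk G I (t - 1) x :=
        ⟨g0, hg0, q.reverse, by rw [SimpleGraph.Walk.length_reverse]; omega⟩
      have hminx : ∀ s, s % 2 = (t - 1) % 2 → s < t - 1 → ¬ Wk G I s x := by
        intro s hs hst hWs
        obtain ⟨g1, hg1, r, hr⟩ := hWs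
        have hpar : (s + 1) % 2 = t % 2 := by omega
        exact hmin (s + 1) hpar (by omega)
          ⟨g1, hg1, r.concat hadj', by rw [SimpleGraph.Walk.length_concat, hr]⟩
      obtain ⟨h', hh'⟩ := ih (t - 1) (by omega) ht1 x hWx hminx
      refine ⟨x, ?_⟩
      have hrw : t - 1 + 1 = t := by omega
      rw [← hrw]
      refine (hS (t - 1) ht1 x u).mpr ⟨hadj', ⟨h', hh'⟩, ?_⟩
      intro hcon
      rcases Nat.eq_or_lt_of_le ht1 with ht2 | ht3
      · -- t - 1 = 1, i.e. t = 2 : S 1 u x means u ∈ I, so Wk 0 u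
        have humem : u ∈ I := by
          have := (hS1 u x).mp (by rw [← ht2] at hcon; exact hcon)
          exact this.1
        exact hmin 0 (by omega) (by omega) ⟨u, humem, SimpleGraph.Walk.nil, rfl⟩
      · -- t - 1 ≥ 2 : u received in round t - 2, so Wk (t-2) u
        have ht4 : 1 ≤ t - 2 := by omega
        have hrw2 : t - 2 + 1 = t - 1 := by omega
        have hcon' := hcon
        rw [← hrw2] at hcon'
        obtain ⟨-, ⟨h'', hh''⟩, -⟩ := (hS (t - 2) ht4 u x).mp hcon'
        have hWu : Wk G I (t - 2) u := lemK1 hconn hI hS1 hS hdI (t - 2) ht4 h'' u hh''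
        exact hmin (t - 2) (by omega) (by omega) hWu

end SLemmas

end AmnesiacFloodingAux

open AmnesiacFloodingAux

/-- Theorem 3.5: flooding has terminated after round `e(I)` (the eccentricity
of the set of initial nodes) if and only if `G` is ec-bipartite, i.e. `G` has
no ec nodes. -/
theorem amnesiac_flooding_terminates_at_eccentricity_iff_ec_bipartite
    {V : Type*} [Fintype V] (G : SimpleGraph V) (hconn : G.Connected)
    (I : Set V) (hI : I.Nonempty)
    (S : ℕ → V → V → Prop) (R : ℕ → Set V) (dI : V → ℕ)
    (hS1 : ∀ g g' : V, S 1 g g' ↔ g ∈ I ∧ G.Adj g g')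
    (hS : ∀ i : ℕ, 1 ≤ i → ∀ g g' : V,
      S (i + 1) g g' ↔ G.Adj g g' ∧ (∃ h, S i h g) ∧ ¬ S i g' g)
    (hR0 : R 0 = I)
    (hR : ∀ i : ℕ, 1 ≤ i → R i = {g : V | ∃ h, S i h g})
    (hdI : ∀ g : V, dI g = sInf {n : ℕ | ∃ g0 ∈ I, G.dist g0 g = n}) :
    (∀ i : ℕ, Finset.univ.sup dI < i → R i = ∅) ↔
      ¬ ∃ g g' : V, G.Adj g g' ∧ dI g' = dI g := by
  set e := Finset.univ.sup dI with he
  constructor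
  · -- termination → no ec node
    intro hterm
    rintro ⟨a, b, hab, hlev⟩
    -- the farthest node
    have hVne : Nonempty V := hconn.nonempty
    obtain ⟨v, -, hv⟩ := Finset.exists_mem_eq_sup (Finset.univ : Finset V)
      Finset.univ_nonempty dI
    -- walks from I to a and to b of length dI a
    obtain ⟨g0, hg0, hd0⟩ := dI_exists hI hdI a
    obtain ⟨g1, hg1, hd1⟩ := dI_exists hI hdI b
    obtain ⟨p1, hp1⟩ := (hconn g0 a).exists_walk_length_eq_dist
    obtain ⟨p2, hp2⟩ := (hconn g1 b).exists_walk_length_eq_dist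
    obtain ⟨w⟩ := hconn b v
    set m := dI a with hm
    -- two walks from I to v of consecutive lengths
    have hW1 : Wk G I (m + w.length) v :=
      ⟨g1, hg1, p2.append w, by rw [SimpleGraph.Walk.length_append, hp2, hd1, hlev]⟩
    have hW2 : Wk G I (m + w.length + 1) v :=
      ⟨g0, hg0, p1.append (SimpleGraph.Walk.cons hab w), by
        rw [SimpleGraph.Walk.length_append, hp1, hd0]
        simp [SimpleGraph.Walk.length_cons]
        omega⟩
    -- the set of wrong-parity walk lengths to v
    have hTne : ∃ s, Wk G I s v ∧ s % 2 = (e + 1) % 2 := by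
      rcases Nat.even_or_odd (m + w.length + e) with hpar | hpar
      · exact ⟨m + w.length + 1, hW2, by
          rcases hpar with ⟨c, hc⟩; omega⟩
      · exact ⟨m + w.length, hW1, by
          rcases hpar with ⟨c, hc⟩; omega⟩
    set t := sInf {s | Wk G I s v ∧ s % 2 = (e + 1) % 2} with hts
    have htmem : Wk G I t v ∧ t % 2 = (e + 1) % 2 := Nat.sInf_mem hTne
    -- every walk from I to v has length ≥ e
    have hge : ∀ s, Wk G I s v → e ≤ s := by
      rintro s ⟨g2, hg2, r, hr⟩
      have := dI_le_walk hdI hg2 r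
      omega
    have hte : e + 1 ≤ t := by
      have h1 : e ≤ t := hge t htmem.1
      have h2 : t % 2 = (e + 1) % 2 := htmem.2
      omega
    have hmin : ∀ s, s % 2 = t % 2 → s < t → ¬ Wk G I s v := by
      intro s hs hst hWs
      have : t ≤ s := Nat.sInf_le ⟨hWs, by omega⟩
      omega
    obtain ⟨h, hst⟩ := lemK2 hconn hI hS1 hS hdI t (by omega) v htmem.1 hmin
    have hvR : v ∈ R t := by
      rw [hR t (by omega)]
      exact ⟨h, hst⟩
    rw [hterm t (by omega)] at hvR
    exact hvR
  · -- no ec node → termination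
    intro hec i hi
    have hi1 : 1 ≤ i := by omega
    rw [hR i hi1]
    ext u
    simp only [Set.mem_setOf_eq, Set.mem_empty_iff_false, iff_false]
    rintro ⟨h, hs⟩
    have := lemA hconn hI hS1 hS hdI hec i hi1 h u hs
    have hle : dI u ≤ e := Finset.le_sup (Finset.mem_univ u)
    omega
end

section
/- Suppose I = {g0} consists of a single initial node of eccentricity e. Then flooding terminates after round e (i.e. R i = ∅ for all i > e) if and only if G is bipartite. -/
open SimpleGraph

namespace AmnesiacFlood

variable {V : Type*} (G : SimpleGraph V) (g0 : V)

/-- There is a walk of length `i` from `g0` to `g`. -/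
def Wk (i : ℕ) (g : V) : Prop := ∃ p : G.Walk g0 g, p.length = i

/-- There is a walk of length `i` but none of length `i - 2`. -/
def Fk (i : ℕ) (g : V) : Prop := Wk G g0 i g ∧ ∀ j, i = j + 2 → ¬ Wk G g0 j g

variable {G g0}

lemma Wk_zero {g : V} : Wk G g0 0 g ↔ g = g0 := by
  constructor
  · rintro ⟨p, hp⟩
    cases p with
    | nil => rfl
    | cons h q => simp at hp
  · rintro rfl; exact ⟨SimpleGraph.Walk.nil, rfl⟩

lemma Wk_one {g : V} : Wk G g0 1 g ↔ G.Adj g0 g := by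
  constructor
  · rintro ⟨p, hp⟩
    cases p with
    | nil => simp at hp
    | cons h q =>
      cases q with
      | nil => exact h
      | cons h' q' => simp at hp
  · intro h; exact ⟨SimpleGraph.Walk.cons h SimpleGraph.Walk.nil, rfl⟩

lemma Wk_step {i : ℕ} {h g : V} (hw : Wk G g0 i h) (hadj : G.Adj h g) :
    Wk G g0 (i + 1) g := by
  obtain ⟨p, hp⟩ := hw
  exact ⟨p.concat hadj, by simp [SimpleGraph.Walk.length_concat, hp]⟩

lemma Wk_pred {i : ℕ} {g : V} (hw : Wk G g0 (i + 1) g) :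
    ∃ h, G.Adj h g ∧ Wk G g0 i h := by
  obtain ⟨p, hp⟩ := hw
  have hq : p.reverse.length = i + 1 := by simpa using hp
  cases hpr : p.reverse with
  | nil => rw [hpr] at hq; simp at hq
  | cons hadj q =>
    rw [hpr] at hq
    simp only [SimpleGraph.Walk.length_cons] at hq
    exact ⟨_, hadj.symm, ⟨q.reverse, by simpa using hq⟩⟩

lemma Wk_pad {i : ℕ} {g : V} (hne : ∃ x, G.Adj g x) (hw : Wk G g0 i g) :
    Wk G g0 (i + 2) g := by
  obtain ⟨x, hx⟩ := hne
  obtain ⟨p, hp⟩ := hw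
  exact ⟨(p.concat hx).concat hx.symm, by simp [SimpleGraph.Walk.length_concat, hp]⟩

lemma Wk_pad_mul {i : ℕ} {g : V} (hne : ∃ x, G.Adj g x) (hw : Wk G g0 i g) :
    ∀ k, Wk G g0 (i + 2 * k) g := by
  intro k
  induction k with
  | zero => simpa using hw
  | succ k ih =>
    have : i + 2 * (k + 1) = (i + 2 * k) + 2 := by omega
    rw [this]
    exact Wk_pad hne ih

lemma Wk_dist_le {i : ℕ} {g : V} (hw : Wk G g0 i g) : G.dist g0 g ≤ i := by
  obtain ⟨p, hp⟩ := hw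
  exact hp ▸ SimpleGraph.dist_le p

lemma Fk_pred {i : ℕ} {g : V} (hf : Fk G g0 (i + 1) g) :
    ∃ h, G.Adj h g ∧ Fk G g0 i h := by
  obtain ⟨hw, hmin⟩ := hf
  obtain ⟨h, hadj, hwh⟩ := Wk_pred hw
  refine ⟨h, hadj, hwh, ?_⟩
  intro j hj hWj
  exact hmin (j + 1) (by omega) (Wk_step hWj hadj)

/-- Parity lemma: with a 2-coloring, walk lengths have parity determined by endpoints. -/
lemma coloring_parity (C : G.Coloring (Fin 2)) {u v : V} (p : G.Walk u v) :
    (C u = C v ↔ Even p.length) := by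
  induction p with
  | nil => simp
  | cons hadj q ih =>
    have hne := C.valid hadj
    simp only [SimpleGraph.Walk.length_cons, Nat.even_add_one]
    have key : ∀ a b c : Fin 2, a ≠ b → (a = c ↔ ¬ b = c) := by decide
    rw [key _ _ _ hne, ih]

section Main

variable (S : ℕ → V → V → Prop)
variable (hS1 : ∀ g g' : V, S 1 g g' ↔ g = g0 ∧ G.Adj g g')
variable (hS : ∀ i : ℕ, 1 ≤ i → ∀ g g' : V,
      S (i + 1) g g' ↔ G.Adj g g' ∧ (∃ h, S i h g) ∧ ¬ S i g' g)

include hS1 hS in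
lemma mainS (hneigh : ∀ g : V, ∃ x, G.Adj g x) :
    ∀ i : ℕ, ∀ h g : V, S (i + 1) h g ↔ G.Adj h g ∧ Fk G g0 i h ∧ Fk G g0 (i + 1) g := by
  intro i
  induction i with
  | zero =>
    intro h g
    rw [hS1]
    constructor
    · rintro ⟨rfl, hadj⟩
      exact ⟨hadj, ⟨Wk_zero.mpr rfl, fun j hj => by omega⟩,
        ⟨Wk_one.mpr hadj, fun j hj => by omega⟩⟩
    · rintro ⟨hadj, ⟨hw0, -⟩, -⟩
      exact ⟨Wk_zero.mp hw0, hadj⟩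
  | succ i ih =>
    intro h g
    rw [hS (i + 1) (by omega)]
    constructor
    · rintro ⟨hadj, ⟨h', hS'⟩, hns⟩
      rw [ih] at hS'
      obtain ⟨-, -, hFh⟩ := hS'
      have hWg : Wk G g0 (i + 2) g := Wk_step hFh.1 hadj
      have hnWig : ¬ Wk G g0 i g := by
        intro hWig
        apply hns
        rw [ih]
        refine ⟨hadj.symm, ⟨hWig, ?_⟩, hFh⟩
        intro j hj hWj
        exact hFh.2 (j + 1) (by omega) (Wk_step hWj hadj.symm)
      refine ⟨hadj, hFh, hWg, ?_⟩
      intro j hj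
      have : j = i := by omega
      rw [this]; exact hnWig
    · rintro ⟨hadj, hFh, hFg⟩
      refine ⟨hadj, ?_, ?_⟩
      · obtain ⟨h'', hadj'', hF''⟩ := Fk_pred hFh
        exact ⟨h'', (ih h'' h).mpr ⟨hadj'', hF'', hFh⟩⟩
      · rw [ih]
        rintro ⟨-, hFig, -⟩
        exact hFg.2 i rfl hFig.1

include hS1 hS in
lemma mainR (hneigh : ∀ g : V, ∃ x, G.Adj g x)
    (R : ℕ → Set V) (hR : ∀ i : ℕ, 1 ≤ i → R i = {g : V | ∃ h, S i h g}) :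
    ∀ i : ℕ, R (i + 1) = {g : V | Fk G g0 (i + 1) g} := by
  intro i
  rw [hR (i + 1) (by omega)]
  ext g
  simp only [Set.mem_setOf_eq]
  constructor
  · rintro ⟨h, hs⟩
    exact ((mainS S hS1 hS hneigh i h g).mp hs).2.2
  · intro hF
    obtain ⟨h, hadj, hFh⟩ := Fk_pred hF
    exact ⟨h, (mainS S hS1 hS hneigh i h g).mpr ⟨hadj, hFh, hF⟩⟩

end Main

end AmnesiacFlood

open AmnesiacFlood

/-- Corollary 3.6: for a single initial node `g0` of eccentricity `e`,
flooding has terminated after round `e` if and only if `G` is bipartite. -/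
theorem amnesiac_flooding_single_source_terminates_at_e_iff_bipartite
    {V : Type*} [Fintype V] (G : SimpleGraph V) (hconn : G.Connected)
    (g0 : V)
    (S : ℕ → V → V → Prop) (R : ℕ → Set V)
    (hS1 : ∀ g g' : V, S 1 g g' ↔ g = g0 ∧ G.Adj g g')
    (hS : ∀ i : ℕ, 1 ≤ i → ∀ g g' : V,
      S (i + 1) g g' ↔ G.Adj g g' ∧ (∃ h, S i h g) ∧ ¬ S i g' g)
    (hR0 : R 0 = {g0})
    (hR : ∀ i : ℕ, 1 ≤ i → R i = {g : V | ∃ h, S i h g}) :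
    (∀ i : ℕ, Finset.univ.sup (fun g => G.dist g0 g) < i → R i = ∅) ↔
      G.Colorable 2 := by
  classical
  by_cases hV : Nontrivial V
  · -- every vertex has a neighbor
    have hneigh : ∀ g : V, ∃ x, G.Adj g x := by
      intro g
      obtain ⟨g', hg'⟩ := exists_ne g
      obtain ⟨p⟩ := (hconn g g')
      cases p with
      | nil => exact absurd rfl hg'.symm
      | cons hadj q => exact ⟨_, hadj⟩
    have hRmain := mainR (g0 := g0) S hS1 hS hneigh R hR
    constructor
    · -- termination → bipartite
      intro hterm
      by_contra hnc
      -- there is an edge with equal distance parity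
      have hedge : ∃ u v, G.Adj u v ∧ G.dist g0 u % 2 = G.dist g0 v % 2 := by
        by_contra hno
        push_neg at hno
        exact hnc ⟨SimpleGraph.Coloring.mk
          (fun g => (⟨G.dist g0 g % 2, by omega⟩ : Fin 2))
          (fun {a b} hadj heq => hno a b hadj (by simpa using congrArg Fin.val heq))⟩
      obtain ⟨u, v, hadj, hpar⟩ := hedge
      have : Nonempty V := hconn.nonempty
      obtain ⟨w, -, hw⟩ := Finset.exists_mem_eq_sup Finset.univ Finset.univ_nonempty
        (fun g => G.dist g0 g)
      set d := G.dist g0 w with hd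
      -- build a walk to w of parity opposite to d
      obtain ⟨p1, hp1⟩ := hconn.exists_walk_length_eq_dist g0 u
      obtain ⟨p2, hp2⟩ := hconn.exists_walk_length_eq_dist g0 v
      obtain ⟨p3, hp3⟩ := hconn.exists_walk_length_eq_dist g0 w
      have hex : ∃ L, Wk G g0 L w ∧ L % 2 ≠ d % 2 := by
        refine ⟨G.dist g0 u + (1 + G.dist g0 v) + d,
          ⟨(p1.append ((SimpleGraph.Walk.cons hadj p2.reverse).append p3)), ?_⟩, by omega⟩
        simp [SimpleGraph.Walk.length_append, hp1, hp2, hp3]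
        omega
      set i := Nat.find hex with hi_def
      obtain ⟨hWi, hpari⟩ := Nat.find_spec hex
      have hFi : Fk G g0 i w := by
        refine ⟨hWi, ?_⟩
        intro j hj hWj
        exact Nat.find_min hex (by omega : j < i) ⟨hWj, by omega⟩
      have hdle : d ≤ i := Wk_dist_le hWi
      have hilt : Finset.univ.sup (fun g => G.dist g0 g) < i := by
        rw [hw]; omega
      have hiempty := hterm i hilt
      obtain ⟨k, hk⟩ : ∃ k, i = k + 1 := ⟨i - 1, by omega⟩
      have hmem : w ∈ R i := by
        rw [hk, hRmain k]
        exact (hk ▸ hFi : Fk G g0 (k + 1) w)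
      rw [hiempty] at hmem
      exact hmem
    · -- bipartite → termination
      rintro ⟨C⟩ i hi
      obtain ⟨k, rfl⟩ : ∃ k, i = k + 1 := ⟨i - 1, by omega⟩
      rw [hRmain k]
      rw [Set.eq_empty_iff_forall_notMem]
      rintro g ⟨⟨p, hp⟩, hmin⟩
      have hdle : G.dist g0 g ≤ Finset.univ.sup (fun g => G.dist g0 g) :=
        Finset.le_sup (Finset.mem_univ g)
      obtain ⟨q, hq⟩ := hconn.exists_walk_length_eq_dist g0 g
      have h1 : (C g0 = C g) ↔ Even p.length := coloring_parity C p
      have h2 : (C g0 = C g) ↔ Even q.length := coloring_parity C q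
      rw [hp] at h1; rw [hq] at h2
      have h3 : Even (k + 1) ↔ Even (G.dist g0 g) := h1.symm.trans h2
      have hparity : (k + 1) % 2 = G.dist g0 g % 2 := by
        by_cases he : (k + 1) % 2 = 0
        · have := h3.mp (Nat.even_iff.mpr he)
          rw [Nat.even_iff] at this; omega
        · have hd : ¬ (G.dist g0 g % 2 = 0) := fun hd => by
            have := h3.mpr (Nat.even_iff.mpr hd)
            rw [Nat.even_iff] at this; exact he this
          omega
      have hdlt : G.dist g0 g < k + 1 := by omega
      obtain ⟨m, hm⟩ : ∃ m, k - 1 = G.dist g0 g + 2 * m :=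
        ⟨(k - 1 - G.dist g0 g) / 2, by omega⟩
      have hWk : Wk G g0 (k - 1) g := hm ▸ Wk_pad_mul (hneigh g) ⟨q, hq⟩ m
      exact hmin (k - 1) (by omega) hWk
  · -- subsingleton case
    have hsub : Subsingleton V := not_nontrivial_iff_subsingleton.mp hV
    have hnoadj : ∀ a b : V, ¬ G.Adj a b := fun a b h => G.ne_of_adj h (Subsingleton.elim a b)
    have hSempty : ∀ i : ℕ, 1 ≤ i → ∀ h g : V, ¬ S i h g := by
      intro i
      induction i with
      | zero => omega
      | succ n ihn =>
        intro _ h g hs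
        rcases Nat.eq_zero_or_pos n with rfl | hn
        · exact hnoadj _ _ ((hS1 h g).mp hs).2
        · exact hnoadj _ _ (((hS n hn h g).mp hs).1)
    constructor
    · intro _
      exact ⟨SimpleGraph.Coloring.mk (fun _ => 0) (fun h => absurd h (hnoadj _ _))⟩
    · intro _ i hi
      rw [hR i (by omega), Set.eq_empty_iff_forall_notMem]
      rintro g ⟨h, hs⟩
      exact hSempty i (by omega) h g hs
end

section
/- If a node h belongs to the round-set R j for the second time (for some j ≥ 1) and g is a neighbour of h, then g belongs to R (j-1) for the second time, or g belongs to R j for the second time, or g belongs to R (j+1) for the second time. -/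
def AFlayer {V : Type*} (G : SimpleGraph V) (I : Set V) : ℕ → Set V
  | 0 => I
  | n+1 => {g | ∃ h, G.Adj h g ∧ h ∈ AFlayer G I n}

def AFmin {V : Type*} (G : SimpleGraph V) (I : Set V) (n : ℕ) : Set V :=
  {g | g ∈ AFlayer G I n ∧ ∀ m < n, m % 2 = n % 2 → g ∉ AFlayer G I m}

lemma AFlayer_succ {V : Type*} (G : SimpleGraph V) (I : Set V) {n : ℕ} {g g' : V}
    (hg : g ∈ AFlayer G I n) (hadj : G.Adj g g') : g' ∈ AFlayer G I (n+1) :=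
  ⟨g, hadj, hg⟩

lemma AFmin_of_layer {V : Type*} (G : SimpleGraph V) (I : Set V) {n : ℕ} {g : V}
    (hg : g ∈ AFlayer G I n) :
    ∃ m, m ≤ n ∧ m % 2 = n % 2 ∧ g ∈ AFmin G I m := by
  classical
  have hP : ∃ m, m % 2 = n % 2 ∧ g ∈ AFlayer G I m := ⟨n, rfl, hg⟩
  refine ⟨Nat.find hP, Nat.find_min' hP ⟨rfl, hg⟩, (Nat.find_spec hP).1,
    (Nat.find_spec hP).2, ?_⟩
  intro m hm hpar hmem
  exact Nat.find_min hP hm ⟨hpar.trans (Nat.find_spec hP).1, hmem⟩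

lemma AFmin_unique {V : Type*} (G : SimpleGraph V) (I : Set V) {a b : ℕ} {g : V}
    (hpar : a % 2 = b % 2) (ha : g ∈ AFmin G I a) (hb : g ∈ AFmin G I b) : a = b := by
  rcases lt_trichotomy a b with h | h | h
  · exact absurd ha.1 (hb.2 a h hpar)
  · exact h
  · exact absurd hb.1 (ha.2 b h hpar.symm)

lemma AFminC {V : Type*} (G : SimpleGraph V) (I : Set V) (k : ℕ) (g : V) :
    ((∃ h, G.Adj h g ∧ h ∈ AFmin G I k) ∧ (k = 0 ∨ g ∉ AFmin G I (k-1))) ↔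
      g ∈ AFmin G I (k+1) := by
  constructor
  · rintro ⟨⟨h, hadj, hmin⟩, hside⟩
    refine ⟨AFlayer_succ G I hmin.1 hadj, ?_⟩
    intro m hm hpar hmem
    have hh : h ∈ AFlayer G I (m+1) := AFlayer_succ G I hmem hadj.symm
    have hm1 : m + 1 ≤ k + 1 := hm
    have hpar' : (m+1) % 2 = k % 2 := by omega
    rcases lt_or_eq_of_le hm1 with hlt | heq
    · rcases Nat.lt_or_ge (m+1) k with hlt2 | hge
      · exact hmin.2 (m+1) hlt2 hpar' hh
      · -- m + 1 = k, so m = k - 1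
        have hmk : m = k - 1 := by omega
        have hk0 : k ≠ 0 := by omega
        rcases hside with h0 | hnot
        · exact hk0 h0
        · -- g ∈ layer (k-1), get min, show it must equal k-1
          obtain ⟨m0, hm0le, hm0par, hm0min⟩ := AFmin_of_layer G I (hmk ▸ hmem)
          rcases lt_or_eq_of_le hm0le with hlt3 | heq3
          · have : h ∈ AFlayer G I (m0+1) := AFlayer_succ G I hm0min.1 hadj.symm
            have : m0 + 1 < k := by omega
            exact hmin.2 (m0+1) this (by omega) (AFlayer_succ G I hm0min.1 hadj.symm)
          · exact hnot (heq3 ▸ hm0min)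
    · omega
  · rintro ⟨hlayer, hforb⟩
    obtain ⟨h, hadj, hmem⟩ := hlayer
    obtain ⟨m0, hm0le, hm0par, hm0min⟩ := AFmin_of_layer G I hmem
    constructor
    · refine ⟨h, hadj, ?_⟩
      rcases lt_or_eq_of_le hm0le with hlt | heq
      · exfalso
        have hg' : g ∈ AFlayer G I (m0+1) := AFlayer_succ G I hm0min.1 hadj
        exact hforb (m0+1) (by omega) (by omega) hg'
      · exact heq ▸ hm0min
    · rcases Nat.eq_zero_or_pos k with h0 | hpos
      · exact Or.inl h0
      · refine Or.inr fun hmin' => ?_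
        exact hforb (k-1) (by omega) (by omega) hmin'.1

lemma AFneighbor {V : Type*} (G : SimpleGraph V) (I : Set V) {n : ℕ} {h g : V}
    (hmin : h ∈ AFmin G I n) (hadj : G.Adj h g) :
    ∃ m, g ∈ AFmin G I m ∧ m ≤ n + 1 ∧ n ≤ m + 1 ∧ m % 2 ≠ n % 2 := by
  have hg : g ∈ AFlayer G I (n+1) := AFlayer_succ G I hmin.1 hadj
  obtain ⟨m, hmle, hmpar, hmmin⟩ := AFmin_of_layer G I hg
  refine ⟨m, hmmin, hmle, ?_, by omega⟩
  by_contra hlt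
  push_neg at hlt
  have hh : h ∈ AFlayer G I (m+1) := AFlayer_succ G I hmmin.1 hadj.symm
  exact hmin.2 (m+1) hlt (by omega) hh

/-- Lemma 3.7: if `h` belongs to round-set `R j` (`j ≥ 1`) for the second
time and `g` is a neighbour of `h`, then `g` belongs to `R (j-1)`, `R j` or
`R (j+1)` for the second time. (Belonging to `R j` for the second time means
`g ∈ R j` and there is exactly one earlier index `i < j` with `g ∈ R i`.) -/
theorem amnesiac_flooding_second_time_neighbours
    {V : Type*} [Fintype V] (G : SimpleGraph V) (hconn : G.Connected)
    (I : Set V) (hI : I.Nonempty)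
    (S : ℕ → V → V → Prop) (R : ℕ → Set V)
    (hS1 : ∀ g g' : V, S 1 g g' ↔ g ∈ I ∧ G.Adj g g')
    (hS : ∀ i : ℕ, 1 ≤ i → ∀ g g' : V,
      S (i + 1) g g' ↔ G.Adj g g' ∧ (∃ h, S i h g) ∧ ¬ S i g' g)
    (hR0 : R 0 = I)
    (hR : ∀ i : ℕ, 1 ≤ i → R i = {g : V | ∃ h, S i h g}) :
    ∀ j : ℕ, 1 ≤ j → ∀ h g : V,
      (h ∈ R j ∧ (∃! i : ℕ, i < j ∧ h ∈ R i)) →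
      G.Adj h g →
      ((g ∈ R (j - 1) ∧ (∃! i : ℕ, i < j - 1 ∧ g ∈ R i)) ∨
       (g ∈ R j ∧ (∃! i : ℕ, i < j ∧ g ∈ R i)) ∨
       (g ∈ R (j + 1) ∧ (∃! i : ℕ, i < j + 1 ∧ g ∈ R i))) := by
  -- Characterization of S in terms of AFmin
  have Schar : ∀ i : ℕ, 1 ≤ i → ∀ g g' : V,
      S i g g' ↔ (G.Adj g g' ∧ g ∈ AFmin G I (i-1) ∧ (i = 1 ∨ g' ∉ AFmin G I (i-2))) := by
    intro i hi
    induction i, hi using Nat.le_induction with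
    | base =>
      intro g g'
      rw [hS1]
      constructor
      · rintro ⟨hgI, hadj⟩
        exact ⟨hadj, ⟨hgI, by omega⟩, Or.inl rfl⟩
      · rintro ⟨hadj, hmin, -⟩
        exact ⟨hmin.1, hadj⟩
    | succ k hk ih =>
      intro g g'
      rw [hS k hk g g']
      have hex : (∃ h, S k h g) ↔
          ((∃ h, G.Adj h g ∧ h ∈ AFmin G I (k-1)) ∧ (k = 1 ∨ g ∉ AFmin G I (k-2))) := by
        constructor
        · rintro ⟨h, hsk⟩
          rw [ih h g] at hsk
          exact ⟨⟨h, hsk.1, hsk.2.1⟩, hsk.2.2⟩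
        · rintro ⟨⟨h, hadj, hmin⟩, hside⟩
          exact ⟨h, (ih h g).mpr ⟨hadj, hmin, hside⟩⟩
      constructor
      · rintro ⟨hadj, hrecv, hnots⟩
        rw [hex] at hrecv
        have hside : k - 1 = 0 ∨ g ∉ AFmin G I (k-1-1) := by
          rcases hrecv.2 with h1 | h2
          · exact Or.inl (by omega)
          · exact Or.inr (by
              have : k - 1 - 1 = k - 2 := by omega
              rw [this]; exact h2)
        have hmin : g ∈ AFmin G I ((k-1)+1) :=
          (AFminC G I (k-1) g).mp ⟨hrecv.1, hside⟩
        have hk1 : (k-1)+1 = k := by omega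
        rw [hk1] at hmin
        refine ⟨hadj, by simpa using hmin, Or.inr fun hg'min => ?_⟩
        -- g' ∈ AFmin (k+1-2) = AFmin (k-1), so S k g' g holds
        apply hnots
        rw [ih g' g]
        have hg'min' : g' ∈ AFmin G I (k-1) := by
          have : k + 1 - 2 = k - 1 := by omega
          rwa [this] at hg'min
        refine ⟨hadj.symm, hg'min', ?_⟩
        rcases Nat.eq_or_lt_of_le hk with h1 | h2
        · exact Or.inl h1.symm
        · -- k ≥ 2; g ∈ AFmin k, so g ∉ AFmin (k-2) by parity uniqueness
          refine Or.inr fun hgk2 => ?_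
          have := AFmin_unique G I (a := k-2) (b := k) (by omega) hgk2 hmin
          omega
      · rintro ⟨hadj, hming, hside⟩
        have hming' : g ∈ AFmin G I ((k-1)+1) := by
          have : (k-1)+1 = k := by omega
          rwa [this]
        have hC := (AFminC G I (k-1) g).mpr hming'
        refine ⟨hadj, ?_, ?_⟩
        · rw [hex]
          refine ⟨hC.1, ?_⟩
          rcases hC.2 with h1 | h2
          · exact Or.inl (by omega)
          · exact Or.inr (by
              have : k - 2 = k - 1 - 1 := by omega
              rw [this]; exact h2)
        · intro hsk
          rw [ih g' g] at hsk
          rcases hside with h1 | h2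
          · omega
          · exact h2 (by
              have hkk : k + 1 - 2 = k - 1 := by omega
              rw [hkk]; exact hsk.2.1)
  -- Characterization of R
  have Rchar : ∀ i : ℕ, R i = AFmin G I i := by
    intro i
    rcases Nat.eq_zero_or_pos i with h0 | hpos
    · subst h0
      rw [hR0]
      ext g
      constructor
      · intro hg
        exact ⟨hg, fun m hm => absurd hm (Nat.not_lt_zero m)⟩
      · intro hg
        exact hg.1
    · rw [hR i hpos]
      ext g'
      simp only [Set.mem_setOf_eq]
      constructor
      · rintro ⟨g, hsg⟩
        rw [Schar i hpos g g'] at hsg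
        have : g' ∈ AFmin G I ((i-1)+1) := by
          apply (AFminC G I (i-1) g').mp
          constructor
          · exact ⟨g, hsg.1, hsg.2.1⟩
          · rcases hsg.2.2 with h1 | h2
            · exact Or.inl (by omega)
            · exact Or.inr (by
                have : i - 1 - 1 = i - 2 := by omega
                rw [this]; exact h2)
        have h11 : (i-1)+1 = i := by omega
        rwa [h11] at this
      · intro hmin
        have hmin' : g' ∈ AFmin G I ((i-1)+1) := by
          have : (i-1)+1 = i := by omega
          rwa [this]
        have hC := (AFminC G I (i-1) g').mpr hmin'
        obtain ⟨g, hadj, hgmin⟩ := hC.1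
        refine ⟨g, ?_⟩
        rw [Schar i hpos g g']
        refine ⟨hadj, hgmin, ?_⟩
        rcases hC.2 with h1 | h2
        · exact Or.inl (by omega)
        · exact Or.inr (by
            have : i - 2 = i - 1 - 1 := by omega
            rw [this]; exact h2)
  -- Main argument
  intro j hj h g hh hadj
  obtain ⟨hhj, i0, ⟨hi0lt, hhi0⟩, -⟩ := hh
  rw [Rchar] at hhj hhi0
  -- parities of i0 and j differ
  have hpar : i0 % 2 ≠ j % 2 := by
    intro heq
    have := AFmin_unique G I heq hhi0 hhj
    omega
  obtain ⟨y, hy, hyle, hyge, hypar⟩ := AFneighbor G I hhi0 hadj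
  obtain ⟨x, hx, hxle, hxge, hxpar⟩ := AFneighbor G I hhj hadj
  -- y has parity of j, x has parity of i0
  have hypj : y % 2 = j % 2 := by omega
  have hxpi : x % 2 = i0 % 2 := by omega
  -- any s with g ∈ AFmin s is x or y
  have hunique : ∀ s : ℕ, g ∈ R s → s = x ∨ s = y := by
    intro s hs
    rw [Rchar] at hs
    rcases Nat.mod_two_eq_zero_or_one s with h0 | h1
    · rcases Nat.mod_two_eq_zero_or_one x with hx0 | hx1
      · exact Or.inl (AFmin_unique G I (by omega) hs hx)
      · exact Or.inr (AFmin_unique G I (by omega) hs hy)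
    · rcases Nat.mod_two_eq_zero_or_one x with hx0 | hx1
      · exact Or.inr (AFmin_unique G I (by omega) hs hy)
      · exact Or.inl (AFmin_unique G I (by omega) hs hx)
  have hyj : y ≤ j := by omega
  -- x = j - 1 or x = j + 1
  have hxcase : x = j - 1 ∨ x = j + 1 := by omega
  rcases hxcase with hxm | hxp
  · -- x = j - 1
    rcases Nat.eq_or_lt_of_le hyj with hyeq | hylt
    · -- y = j : middle disjunct
      refine Or.inr (Or.inl ⟨by rw [Rchar, ← hyeq]; exact hy, ?_⟩)
      refine ⟨x, ⟨by omega, by rw [Rchar]; exact hx⟩, ?_⟩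
      rintro s ⟨hslt, hsR⟩
      rcases hunique s hsR with h1 | h2
      · exact h1
      · omega
    · -- y < j, so y < j - 1 = x : first disjunct
      have hylt' : y < j - 1 := by omega
      refine Or.inl ⟨by rw [Rchar, ← hxm] at *; exact hx, ?_⟩
      refine ⟨y, ⟨hylt', by rw [Rchar]; exact hy⟩, ?_⟩
      rintro s ⟨hslt, hsR⟩
      rcases hunique s hsR with h1 | h2
      · omega
      · exact h2
  · -- x = j + 1 : third disjunct
    refine Or.inr (Or.inr ⟨by rw [Rchar, ← hxp]; exact hx, ?_⟩)
    refine ⟨y, ⟨by omega, by rw [Rchar]; exact hy⟩, ?_⟩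
    rintro s ⟨hslt, hsR⟩
    rcases hunique s hsR with h1 | h2
    · omega
    · exact h2
end

section
/- G has an ec node if and only if every node of G is contained in exactly two distinct round-sets, i.e. for every node g the set {i ∈ ℕ : g ∈ R i} has exactly two elements. -/
namespace AmnesiacAux

variable {V : Type*} (G : SimpleGraph V) (I : Set V)

/-- Lengths of walks from some initial node to `g`. -/
def Wk (g : V) : Set ℕ := {n | ∃ g0 ∈ I, ∃ w : G.Walk g0 g, w.length = n}

/-- `n` is the minimal length, among walks from `I` to `g`, of its parity class. -/
def Mn (g : V) (n : ℕ) : Prop :=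
  n ∈ Wk G I g ∧ ∀ m ∈ Wk G I g, m % 2 = n % 2 → n ≤ m

variable {G I}

lemma wk_extend {h g : V} (hadj : G.Adj h g) {n : ℕ} (hn : n ∈ Wk G I h) :
    n + 1 ∈ Wk G I g := by
  obtain ⟨g0, hg0, w, hw⟩ := hn
  exact ⟨g0, hg0, w.concat hadj, by simp [SimpleGraph.Walk.length_concat, hw]⟩

lemma wk_last {g : V} {n : ℕ} (hn : n + 1 ∈ Wk G I g) :
    ∃ h, G.Adj h g ∧ n ∈ Wk G I h := by
  obtain ⟨g0, hg0, w, hw⟩ := hn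
  cases hr : w.reverse with
  | nil =>
    exfalso
    have := congrArg SimpleGraph.Walk.length hr
    simp [SimpleGraph.Walk.length_reverse, hw] at this
  | cons hadj t =>
    refine ⟨_, hadj.symm, g0, hg0, t.reverse, ?_⟩
    have := congrArg SimpleGraph.Walk.length hr
    simp only [SimpleGraph.Walk.length_reverse, SimpleGraph.Walk.length_cons, hw] at this ⊢
    omega

lemma mn_zero {g : V} : Mn G I g 0 ↔ g ∈ I := by
  constructor
  · rintro ⟨⟨g0, hg0, w, hw⟩, -⟩
    have := SimpleGraph.Walk.eq_of_length_eq_zero hw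
    exact this ▸ hg0
  · intro hg
    exact ⟨⟨g, hg, SimpleGraph.Walk.nil, by simp⟩, fun m _ _ => Nat.zero_le m⟩

lemma mn_unique {g : V} {i j : ℕ} (hi : Mn G I g i) (hj : Mn G I g j)
    (hp : i % 2 = j % 2) : i = j :=
  le_antisymm (hi.2 j hj.1 hp.symm) (hj.2 i hi.1 hp)

/-- The key characterization of the send relation via parity-minimal walk lengths. -/
lemma char (S : ℕ → V → V → Prop)
    (hS1 : ∀ g g' : V, S 1 g g' ↔ g ∈ I ∧ G.Adj g g')
    (hS : ∀ i : ℕ, 1 ≤ i → ∀ g g' : V,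
      S (i + 1) g g' ↔ G.Adj g g' ∧ (∃ h, S i h g) ∧ ¬ S i g' g) :
    ∀ i : ℕ, ∀ h g : V,
      S (i + 1) h g ↔ G.Adj h g ∧ Mn G I h i ∧ Mn G I g (i + 1) := by
  intro i
  induction i with
  | zero =>
    intro h g
    rw [hS1]
    constructor
    · rintro ⟨hIh, hadj⟩
      refine ⟨hadj, mn_zero.mpr hIh, ⟨wk_extend hadj (mn_zero.mpr hIh).1, ?_⟩⟩
      intro m _ hp
      omega
    · rintro ⟨hadj, hh, -⟩
      exact ⟨mn_zero.mp hh, hadj⟩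
  | succ i IH =>
    intro g g'
    rw [hS (i + 1) (by omega)]
    have hex : (∃ h, S (i + 1) h g) ↔ Mn G I g (i + 1) := by
      constructor
      · rintro ⟨h, hh⟩; exact ((IH h g).mp hh).2.2
      · intro hg
        obtain ⟨h, hadj, hn⟩ := wk_last hg.1
        have hmh : Mn G I h i := by
          refine ⟨hn, fun m hm hp => ?_⟩
          have := hg.2 (m + 1) (wk_extend hadj hm) (by omega)
          omega
        exact ⟨h, (IH h g).mpr ⟨hadj, hmh, hg⟩⟩
    constructor
    · rintro ⟨hadj, hAg, hnS⟩
      have hg : Mn G I g (i + 1) := hex.mp hAg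
      have hng' : ¬ Mn G I g' i := fun hc => hnS ((IH g' g).mpr ⟨hadj.symm, hc, hg⟩)
      refine ⟨hadj, hg, ?_⟩
      refine ⟨wk_extend hadj hg.1, ?_⟩
      intro m hm hp
      by_contra hlt
      have hle : m ≤ i + 1 := by omega
      have hm1 : m + 1 ∈ Wk G I g := wk_extend hadj.symm hm
      have h1 := hg.2 (m + 1) hm1 (by omega)
      have hmi : m = i := by omega
      subst hmi
      apply hng'
      refine ⟨hm, fun m' hm' hp' => ?_⟩
      have := hg.2 (m' + 1) (wk_extend hadj.symm hm') (by omega)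
      omega
    · rintro ⟨hadj, hg, hg2⟩
      refine ⟨hadj, hex.mpr hg, fun hc => ?_⟩
      have h1 : Mn G I g' i := ((IH g' g).mp hc).2.1
      have := mn_unique h1 hg2 (by omega)
      omega

/-- If no edge joins nodes at the same level, walk lengths have determined parity. -/
lemma parity_walk (dI : V → ℕ)
    (hstep : ∀ x y : V, G.Adj x y → (dI x + dI y) % 2 = 1) :
    ∀ {u v : V} (w : G.Walk u v), (w.length + dI u + dI v) % 2 = 0 := by
  intro u v w
  induction w with
  | nil => simp; omega
  | cons hadj t IH =>
    have := hstep _ _ hadj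
    simp only [SimpleGraph.Walk.length_cons] at *
    omega

end AmnesiacAux

/-- Corollary 3.8: `G` has an ec node if and only if every node of `G` is
contained in exactly two distinct round-sets. -/
theorem amnesiac_flooding_ec_iff_all_exactly_two
    {V : Type*} [Fintype V] (G : SimpleGraph V) (hconn : G.Connected)
    (I : Set V) (hI : I.Nonempty)
    (S : ℕ → V → V → Prop) (R : ℕ → Set V) (dI : V → ℕ)
    (hS1 : ∀ g g' : V, S 1 g g' ↔ g ∈ I ∧ G.Adj g g')
    (hS : ∀ i : ℕ, 1 ≤ i → ∀ g g' : V,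
      S (i + 1) g g' ↔ G.Adj g g' ∧ (∃ h, S i h g) ∧ ¬ S i g' g)
    (hR0 : R 0 = I)
    (hR : ∀ i : ℕ, 1 ≤ i → R i = {g : V | ∃ h, S i h g})
    (hdI : ∀ g : V, dI g = sInf {n : ℕ | ∃ g0 ∈ I, G.dist g0 g = n}) :
    (∃ g g' : V, G.Adj g g' ∧ dI g' = dI g) ↔
      (∀ g : V, {i : ℕ | g ∈ R i}.encard = 2) := by
  classical
  obtain ⟨gI, hgI⟩ := hI
  have hchar := AmnesiacAux.char (G := G) (I := I) S hS1 hS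
  -- membership in round-sets in terms of `Mn`
  have hRmem : ∀ (g : V) (i : ℕ), g ∈ R i ↔ AmnesiacAux.Mn G I g i := by
    intro g i
    cases i with
    | zero =>
      rw [hR0]
      exact AmnesiacAux.mn_zero.symm
    | succ i =>
      rw [hR (i + 1) (by omega)]
      simp only [Set.mem_setOf_eq]
      constructor
      · rintro ⟨h, hh⟩; exact ((hchar i h g).mp hh).2.2
      · intro hg
        obtain ⟨h, hadj, hn⟩ := AmnesiacAux.wk_last hg.1
        have hmh : AmnesiacAux.Mn G I h i := by
          refine ⟨hn, fun m hm hp => ?_⟩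
          have := hg.2 (m + 1) (AmnesiacAux.wk_extend hadj hm) (by omega)
          omega
        exact ⟨h, (hchar i h g).mpr ⟨hadj, hmh, hg⟩⟩
  have hWkne : ∀ g : V, (AmnesiacAux.Wk G I g).Nonempty := by
    intro g
    exact ⟨_, gI, hgI, (hconn.preconnected gI g).some, rfl⟩
  -- parity-class minima exist
  have hminpar : ∀ (g : V) (n : ℕ), n ∈ AmnesiacAux.Wk G I g →
      ∃ m, AmnesiacAux.Mn G I g m ∧ m % 2 = n % 2 := by
    intro g n hn
    have hne : {m | m ∈ AmnesiacAux.Wk G I g ∧ m % 2 = n % 2}.Nonempty := ⟨n, hn, rfl⟩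
    have hmem := Nat.sInf_mem hne
    refine ⟨_, ⟨hmem.1, fun m hm hp => Nat.sInf_le ⟨hm, ?_⟩⟩, hmem.2⟩
    have := hmem.2
    omega
  have hdI_mem : ∀ g : V, ∃ g0 ∈ I, G.dist g0 g = dI g := by
    intro g
    rw [hdI]
    have hne : {n : ℕ | ∃ g0 ∈ I, G.dist g0 g = n}.Nonempty := ⟨G.dist gI g, gI, hgI, rfl⟩
    exact Nat.sInf_mem hne
  constructor
  · -- an ec edge gives both parities everywhere
    rintro ⟨a, b, hab, hdba⟩ g
    obtain ⟨ga, hga, hda⟩ := hdI_mem a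
    obtain ⟨gb, hgb, hdb⟩ := hdI_mem b
    obtain ⟨wa, hwa⟩ := (hconn.preconnected ga a).exists_walk_length_eq_dist
    obtain ⟨wb, hwb⟩ := (hconn.preconnected gb b).exists_walk_length_eq_dist
    set w3 := (hconn.preconnected gb g).some with hw3
    have hn1 : w3.length ∈ AmnesiacAux.Wk G I g := ⟨gb, hgb, w3, rfl⟩
    have hn2 : dI a + (1 + (dI b + w3.length)) ∈ AmnesiacAux.Wk G I g := by
      refine ⟨ga, hga, wa.append (SimpleGraph.Walk.cons hab (wb.reverse.append w3)), ?_⟩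
      simp [SimpleGraph.Walk.length_append, SimpleGraph.Walk.length_cons,
        SimpleGraph.Walk.length_reverse, hwa, hwb, hda, hdb]
      omega
    obtain ⟨m0, hm0, hp0⟩ := hminpar g _ hn1
    obtain ⟨m1, hm1, hp1⟩ := hminpar g _ hn2
    have hdiff : (dI a + (1 + (dI b + w3.length))) % 2 ≠ w3.length % 2 := by
      rw [hdba]; omega
    have hnem : m0 ≠ m1 := by omega
    have hset : {i : ℕ | g ∈ R i} = {m0, m1} := by
      ext i
      simp only [Set.mem_setOf_eq, hRmem, Set.mem_insert_iff, Set.mem_singleton_iff]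
      constructor
      · intro hi
        by_cases hp : i % 2 = w3.length % 2
        · exact Or.inl (AmnesiacAux.mn_unique hi hm0 (by omega))
        · exact Or.inr (AmnesiacAux.mn_unique hi hm1 (by omega))
      · rintro (rfl | rfl)
        · exact hm0
        · exact hm1
    rw [hset]
    exact Set.encard_pair hnem
  · -- contrapositive: no ec edge gives a node in exactly one round-set
    intro hall
    by_contra hnec
    push_neg at hnec
    have hdI0 : ∀ g ∈ I, dI g = 0 := by
      intro g hg
      rw [hdI]
      exact Nat.sInf_eq_zero.mpr (Or.inl ⟨g, hg, SimpleGraph.dist_self⟩)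
    have hdIle : ∀ x y : V, G.Adj x y → dI y ≤ dI x + 1 := by
      intro x y hxy
      obtain ⟨g0, hg0, hdx⟩ := hdI_mem x
      have h1 : G.dist x y ≤ 1 := by
        simpa using SimpleGraph.dist_le hxy.toWalk
      have h2 : G.dist g0 y ≤ G.dist g0 x + G.dist x y := hconn.dist_triangle
      have h3 : dI y ≤ G.dist g0 y := by
        rw [hdI]; exact Nat.sInf_le ⟨g0, hg0, rfl⟩
      omega
    have hstep : ∀ x y : V, G.Adj x y → (dI x + dI y) % 2 = 1 := by
      intro x y hxy
      have h1 := hdIle x y hxy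
      have h2 := hdIle y x hxy.symm
      have h3 := hnec x y hxy
      omega
    have hpar : ∀ n ∈ AmnesiacAux.Wk G I gI, n % 2 = 0 := by
      rintro n ⟨g1, hg1, w, hw⟩
      have := AmnesiacAux.parity_walk dI hstep w
      have h1 := hdI0 g1 hg1
      have h2 := hdI0 gI hgI
      omega
    obtain ⟨n, hn⟩ := hWkne gI
    obtain ⟨m0, hm0, -⟩ := hminpar gI n hn
    have hset : {i : ℕ | gI ∈ R i} = {m0} := by
      ext i
      simp only [Set.mem_setOf_eq, hRmem, Set.mem_singleton_iff]
      constructor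
      · intro hi
        exact AmnesiacAux.mn_unique hi hm0 (by rw [hpar i hi.1, hpar m0 hm0.1])
      · rintro rfl; exact hm0
    have h2 := hall gI
    rw [hset, Set.encard_singleton] at h2
    exact absurd h2 (by norm_num)
end

section
/- Suppose G is not ec-bipartite. Then flooding terminates after round j, where j is the largest index with R j ≠ ∅, and j satisfies e(I) < j ≤ min{ d(I, g) + e(g) + 1 : g ∈ V is an ec node }, where e(g) = max{dist(g,g') : g' ∈ V} is the eccentricity of g. -/
/-!
Let `m(v, p)` be the length of a shortest walk from `I` to `v` whose length has parity `p`.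
By induction on the round, `g` sends to `g'` in round `k + 1` exactly when `m(g, k) = k` and
`m(g', k + 1) = k + 1`, so `R i = {v | m(v, i) = i}`: amnesiac flooding is a breadth-first search
in the bipartite double cover of `G`. An ec node `g` with neighbour `g'` at the same distance
from `I` is reached by walks of both parities, of lengths `d(I,g)` and `d(I,g) + 1`, so every
`m(v, p)` is finite and at most `d(I,g) + dist(g,v) + 1`. Hence flooding stops after round
`j = max m(v, p)`, and `j > d(I,v)` since `m(v, 0)` and `m(v, 1)` are distinct and at least
`d(I,v)`.
-/

namespace SimpleGraph

variable {V : Type*} (G : SimpleGraph V) (I : Set V)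

def IsWalkLengthFrom (v : V) (n : ℕ) : Prop :=
  ∃ u ∈ I, ∃ w : G.Walk u v, w.length = n

noncomputable def setDist (v : V) : ℕ :=
  sInf {n : ℕ | ∃ u ∈ I, G.dist u v = n}

/-- Junk value `0` when no walk of parity `p` reaches `v`; see `HasBothParities`. -/
noncomputable def parityDist (v : V) (p : ℕ) : ℕ :=
  sInf {n : ℕ | G.IsWalkLengthFrom I v n ∧ n % 2 = p % 2}

def HasBothParities : Prop :=
  ∀ (v : V) (p : ℕ), ∃ n, G.IsWalkLengthFrom I v n ∧ n % 2 = p % 2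

variable {G I}

namespace IsWalkLengthFrom

theorem append {u v : V} {n : ℕ} (h : G.IsWalkLengthFrom I u n) (w : G.Walk u v) :
    G.IsWalkLengthFrom I v (n + w.length) := by
  obtain ⟨s, hs, q, rfl⟩ := h
  exact ⟨s, hs, q.append w, Walk.length_append q w⟩

theorem concat {u v : V} {n : ℕ} (h : G.IsWalkLengthFrom I u n) (huv : G.Adj u v) :
    G.IsWalkLengthFrom I v (n + 1) :=
  h.append (Walk.cons huv Walk.nil)

theorem exists_adj {v : V} {n : ℕ} (h : G.IsWalkLengthFrom I v (n + 1)) :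
    ∃ u, G.Adj u v ∧ G.IsWalkLengthFrom I u n := by
  obtain ⟨s, hs, w, hw⟩ := h
  cases hrev : w.reverse with
  | nil => simp [← Walk.length_reverse w, hrev] at hw
  | cons hvu q =>
    refine ⟨_, hvu.symm, s, hs, q.reverse, ?_⟩
    simpa [← Walk.length_reverse w, hrev] using hw

theorem zero_iff {v : V} : G.IsWalkLengthFrom I v 0 ↔ v ∈ I :=
  ⟨fun ⟨_, hs, _, hw⟩ => Walk.eq_of_length_eq_zero hw ▸ hs, fun hv => ⟨v, hv, .nil, rfl⟩⟩

theorem setDist_le {v : V} {n : ℕ} (h : G.IsWalkLengthFrom I v n) : G.setDist I v ≤ n := by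
  obtain ⟨s, hs, w, rfl⟩ := h
  exact (Nat.sInf_le (s := {n | ∃ u ∈ I, G.dist u v = n}) ⟨s, hs, rfl⟩).trans (dist_le w)

end IsWalkLengthFrom

theorem isWalkLengthFrom_setDist (hconn : G.Connected) (hI : I.Nonempty) (v : V) :
    G.IsWalkLengthFrom I v (G.setDist I v) := by
  obtain ⟨s, hs⟩ := hI
  have hne : {n | ∃ u ∈ I, G.dist u v = n}.Nonempty := ⟨_, s, hs, rfl⟩
  obtain ⟨u, hu, hdist⟩ := Nat.sInf_mem hne
  obtain ⟨w, hw⟩ := hconn.exists_walk_length_eq_dist u v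
  exact ⟨u, hu, w, hw.trans hdist⟩

theorem exists_isWalkLengthFrom_parity_le (hconn : G.Connected) (hI : I.Nonempty) {a b : V}
    (hab : G.Adj a b) (hd : G.setDist I b = G.setDist I a) (v : V) (p : ℕ) :
    ∃ n, G.IsWalkLengthFrom I v n ∧ n % 2 = p % 2 ∧ n ≤ G.setDist I a + G.dist a v + 1 := by
  obtain ⟨w, hw⟩ := hconn.exists_walk_length_eq_dist a v
  have heven := (isWalkLengthFrom_setDist hconn hI a).append w
  have hodd := ((isWalkLengthFrom_setDist hconn hI b).concat hab.symm).append w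
  rw [hd, hw] at hodd
  rw [hw] at heven
  by_cases hp : (G.setDist I a + G.dist a v) % 2 = p % 2
  · exact ⟨_, heven, hp, by omega⟩
  · exact ⟨_, hodd, by omega, by omega⟩

theorem hasBothParities_of_adj (hconn : G.Connected) (hI : I.Nonempty) {a b : V}
    (hab : G.Adj a b) (hd : G.setDist I b = G.setDist I a) : G.HasBothParities I :=
  fun v p =>
    let ⟨n, hn, hnp, _⟩ := exists_isWalkLengthFrom_parity_le hconn hI hab hd v p
    ⟨n, hn, hnp⟩

theorem parityDist_le {v : V} {p n : ℕ} (h : G.IsWalkLengthFrom I v n) (hp : n % 2 = p % 2) :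
    G.parityDist I v p ≤ n :=
  Nat.sInf_le ⟨h, hp⟩

theorem parityDist_congr (v : V) {p q : ℕ} (h : p % 2 = q % 2) :
    G.parityDist I v p = G.parityDist I v q := by
  simp only [parityDist, h]

theorem parityDist_le_setDist_add_dist (hconn : G.Connected) (hI : I.Nonempty) {a b : V}
    (hab : G.Adj a b) (hd : G.setDist I b = G.setDist I a) (v : V) (p : ℕ) :
    G.parityDist I v p ≤ G.setDist I a + G.dist a v + 1 :=
  let ⟨_, hn, hnp, hle⟩ := exists_isWalkLengthFrom_parity_le hconn hI hab hd v p
  (parityDist_le hn hnp).trans hle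

namespace HasBothParities

theorem isWalkLengthFrom_parityDist (hpar : G.HasBothParities I) (v : V) (p : ℕ) :
    G.IsWalkLengthFrom I v (G.parityDist I v p) ∧ G.parityDist I v p % 2 = p % 2 :=
  Nat.sInf_mem (hpar v p)

theorem setDist_le_parityDist (hpar : G.HasBothParities I) (v : V) (p : ℕ) :
    G.setDist I v ≤ G.parityDist I v p :=
  (hpar.isWalkLengthFrom_parityDist v p).1.setDist_le

theorem parityDist_succ_le_of_adj (hpar : G.HasBothParities I) {u v : V} (huv : G.Adj u v)
    (p : ℕ) : G.parityDist I v (p + 1) ≤ G.parityDist I u p + 1 := by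
  obtain ⟨hwalk, hmod⟩ := hpar.isWalkLengthFrom_parityDist u p
  exact parityDist_le (hwalk.concat huv) (by omega)

theorem parityDist_zero_eq_zero_iff (hpar : G.HasBothParities I) (v : V) :
    G.parityDist I v 0 = 0 ↔ v ∈ I := by
  refine ⟨fun h => ?_, fun hv => Nat.le_zero.1 (parityDist_le (IsWalkLengthFrom.zero_iff.2 hv) rfl)⟩
  have hwalk := (hpar.isWalkLengthFrom_parityDist v 0).1
  rwa [h, IsWalkLengthFrom.zero_iff] at hwalk

theorem exists_adj_parityDist_eq (hpar : G.HasBothParities I) {v : V} {k : ℕ}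
    (hv : G.parityDist I v (k + 1) = k + 1) : ∃ u, G.Adj u v ∧ G.parityDist I u k = k := by
  have hwalk := (hpar.isWalkLengthFrom_parityDist v (k + 1)).1
  rw [hv] at hwalk
  obtain ⟨u, huv, hu⟩ := hwalk.exists_adj
  have hle : G.parityDist I u k ≤ k := parityDist_le hu rfl
  have hge := hpar.parityDist_succ_le_of_adj huv k
  exact ⟨u, huv, by omega⟩

/-- The edge `uv` squeezes `parityDist I v k` between `k` and `k + 2`; parity does the rest. -/
theorem parityDist_add_two_eq (hpar : G.HasBothParities I) {u v : V} {k : ℕ} (huv : G.Adj u v)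
    (hu : G.parityDist I u (k + 1) = k + 1) (hv : G.parityDist I v k ≠ k) :
    G.parityDist I v (k + 2) = k + 2 := by
  have hupper : G.parityDist I v (k + 2) ≤ G.parityDist I u (k + 1) + 1 :=
    hpar.parityDist_succ_le_of_adj huv (k + 1)
  have hlower := hpar.parityDist_succ_le_of_adj huv.symm k
  have hmod := (hpar.isWalkLengthFrom_parityDist v k).2
  have hcongr := parityDist_congr (G := G) (I := I) v (p := k + 2) (q := k) (by omega)
  omega

end HasBothParities

section Flooding

variable {S : ℕ → V → V → Prop}

theorem receives_iff_of_sends_iff (hpar : G.HasBothParities I) {k : ℕ} {T : V → V → Prop}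
    (hT : ∀ u v, T u v ↔
      G.Adj u v ∧ G.parityDist I u k = k ∧ G.parityDist I v (k + 1) = k + 1) (v : V) :
    (∃ u, T u v) ↔ G.parityDist I v (k + 1) = k + 1 := by
  refine ⟨fun ⟨u, hu⟩ => ((hT u v).1 hu).2.2, fun hv => ?_⟩
  obtain ⟨u, huv, hu⟩ := hpar.exists_adj_parityDist_eq hv
  exact ⟨u, (hT u v).2 ⟨huv, hu, hv⟩⟩

theorem sends_iff (hpar : G.HasBothParities I) (hS1 : ∀ u v, S 1 u v ↔ u ∈ I ∧ G.Adj u v)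
    (hS : ∀ i, 1 ≤ i → ∀ u v, S (i + 1) u v ↔ G.Adj u v ∧ (∃ w, S i w u) ∧ ¬ S i v u)
    (k : ℕ) (u v : V) :
    S (k + 1) u v ↔ G.Adj u v ∧ G.parityDist I u k = k ∧ G.parityDist I v (k + 1) = k + 1 := by
  induction k generalizing u v with
  | zero =>
    rw [zero_add, hS1, ← hpar.parityDist_zero_eq_zero_iff]
    refine ⟨fun ⟨hu, huv⟩ => ⟨huv, hu, ?_⟩, fun ⟨huv, hu, _⟩ => ⟨hu, huv⟩⟩
    have hle : G.parityDist I v 1 ≤ G.parityDist I u 0 + 1 := hpar.parityDist_succ_le_of_adj huv 0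
    have hodd := (hpar.isWalkLengthFrom_parityDist v 1).2
    omega
  | succ k ih =>
    rw [hS (k + 1) k.succ_pos, receives_iff_of_sends_iff hpar ih, ih v u]
    have hcongr := parityDist_congr (G := G) (I := I) v (p := k + 1 + 1) (q := k) (by omega)
    constructor
    · rintro ⟨huv, hu, hback⟩
      exact ⟨huv, hu, hpar.parityDist_add_two_eq huv hu fun hv => hback ⟨huv.symm, hv, hu⟩⟩
    · rintro ⟨huv, hu, hv⟩
      exact ⟨huv, hu, fun ⟨_, hv', _⟩ => by omega⟩

theorem mem_round_iff (hpar : G.HasBothParities I) (hS1 : ∀ u v, S 1 u v ↔ u ∈ I ∧ G.Adj u v)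
    (hS : ∀ i, 1 ≤ i → ∀ u v, S (i + 1) u v ↔ G.Adj u v ∧ (∃ w, S i w u) ∧ ¬ S i v u)
    {R : ℕ → Set V} (hR0 : R 0 = I) (hR : ∀ i, 1 ≤ i → R i = {v | ∃ u, S i u v})
    (i : ℕ) (v : V) : v ∈ R i ↔ G.parityDist I v i = i := by
  cases i with
  | zero => rw [hR0]; exact (hpar.parityDist_zero_eq_zero_iff v).symm
  | succ k =>
    rw [hR (k + 1) k.succ_pos]
    exact receives_iff_of_sends_iff hpar (sends_iff hpar hS1 hS k) v

end Flooding

section FloodingTime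

variable [Fintype V]

variable (G I) in
noncomputable def floodingTime : ℕ :=
  Finset.univ.sup fun v => max (G.parityDist I v 0) (G.parityDist I v 1)

theorem parityDist_le_floodingTime (v : V) (p : ℕ) : G.parityDist I v p ≤ G.floodingTime I := by
  have hv : max (G.parityDist I v 0) (G.parityDist I v 1) ≤ G.floodingTime I :=
    Finset.le_sup (f := fun v => max (G.parityDist I v 0) (G.parityDist I v 1)) (Finset.mem_univ v)
  rcases Nat.mod_two_eq_zero_or_one p with hp | hp
  · exact (parityDist_congr v hp).trans_le ((le_max_left _ _).trans hv)
  · exact (parityDist_congr v hp).trans_le ((le_max_right _ _).trans hv)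

theorem HasBothParities.exists_parityDist_floodingTime_eq (hpar : G.HasBothParities I)
    [Nonempty V] : ∃ v, G.parityDist I v (G.floodingTime I) = G.floodingTime I := by
  obtain ⟨v, -, hv⟩ := Finset.exists_mem_eq_sup Finset.univ Finset.univ_nonempty
    fun v => max (G.parityDist I v 0) (G.parityDist I v 1)
  have h0 := (hpar.isWalkLengthFrom_parityDist v 0).2
  have h1 := (hpar.isWalkLengthFrom_parityDist v 1).2
  refine ⟨v, ?_⟩
  rcases max_choice (G.parityDist I v 0) (G.parityDist I v 1) with hmax | hmax <;>
  · rw [← floodingTime, hmax] at hv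
    rw [hv]
    exact parityDist_congr v (by omega)

theorem HasBothParities.setDist_lt_floodingTime (hpar : G.HasBothParities I) (v : V) :
    G.setDist I v < G.floodingTime I := by
  have h0 := (hpar.isWalkLengthFrom_parityDist v 0).2
  have h1 := (hpar.isWalkLengthFrom_parityDist v 1).2
  have := hpar.setDist_le_parityDist v 0
  have := hpar.setDist_le_parityDist v 1
  have := parityDist_le_floodingTime (G := G) (I := I) v 0
  have := parityDist_le_floodingTime (G := G) (I := I) v 1
  omega

end FloodingTime

end SimpleGraph

open SimpleGraph in
/-- Theorem 3.9: if `G` is not ec-bipartite (it has an ec node), then flooding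
terminates after round `j`, where `j` is the largest index with `R j ≠ ∅`, and
`e(I) < j ≤ min { d(I,g) + e(g) + 1 : g an ec node }`. -/
theorem amnesiac_flooding_termination_bounds
    {V : Type*} [Fintype V] (G : SimpleGraph V) (hconn : G.Connected)
    (I : Set V) (hI : I.Nonempty)
    (S : ℕ → V → V → Prop) (R : ℕ → Set V) (dI : V → ℕ)
    (hS1 : ∀ g g' : V, S 1 g g' ↔ g ∈ I ∧ G.Adj g g')
    (hS : ∀ i : ℕ, 1 ≤ i → ∀ g g' : V,
      S (i + 1) g g' ↔ G.Adj g g' ∧ (∃ h, S i h g) ∧ ¬ S i g' g)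
    (hR0 : R 0 = I)
    (hR : ∀ i : ℕ, 1 ≤ i → R i = {g : V | ∃ h, S i h g})
    (hdI : ∀ g : V, dI g = sInf {n : ℕ | ∃ g0 ∈ I, G.dist g0 g = n})
    (hec : ∃ g g' : V, G.Adj g g' ∧ dI g' = dI g) :
    ∃ j : ℕ, (R j ≠ ∅ ∧ ∀ k : ℕ, j < k → R k = ∅) ∧
      Finset.univ.sup dI < j ∧
      ∀ g : V, (∃ g' : V, G.Adj g g' ∧ dI g' = dI g) →
        j ≤ dI g + Finset.univ.sup (fun g' => G.dist g g') + 1 := by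
  obtain ⟨a, b, hab, hdab⟩ := hec
  obtain rfl : dI = G.setDist I := funext hdI
  have hpar := hasBothParities_of_adj hconn hI hab hdab
  have hround := mem_round_iff hpar hS1 hS hR0 hR
  have : Nonempty V := ⟨a⟩
  refine ⟨G.floodingTime I, ⟨?_, ?_⟩, ?_, ?_⟩
  · obtain ⟨v, hv⟩ := hpar.exists_parityDist_floodingTime_eq
    exact Set.nonempty_iff_ne_empty.1 ⟨v, (hround _ v).2 hv⟩
  · refine fun k hk => Set.eq_empty_of_forall_notMem fun v hv => ?_
    exact ((parityDist_le_floodingTime v k).trans_lt hk).ne ((hround k v).1 hv)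
  · exact (Finset.sup_lt_iff ((Nat.zero_le _).trans_lt (hpar.setDist_lt_floodingTime a))).2
      fun v _ => hpar.setDist_lt_floodingTime v
  · rintro g ⟨g', hadj, hd⟩
    refine Finset.sup_le fun v _ => max_le ?_ ?_ <;>
    · refine (parityDist_le_setDist_add_dist hconn hI hadj hd v _).trans ?_
      gcongr
      exact Finset.le_sup (f := fun v => G.dist g v) (Finset.mem_univ v)
end

section
/- Suppose G is a non-bipartite finite connected graph with diameter d and the flooding is initiated from a single node g0 of eccentricity e (I = {g0}). Then flooding terminates after round j, where j is the largest index with R j ≠ ∅, and j satisfies e < j ≤ e + d + 1. -/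
namespace AFaux

open SimpleGraph

variable {V : Type*} (G : SimpleGraph V) (g0 : V)

/-- there is a walk from `g0` to `v` of length `i`. -/
def AFw (i : ℕ) (v : V) : Prop := ∃ w : G.Walk g0 v, w.length = i

/-- `i` is the minimal walk length of its parity from `g0` to `v`. -/
def minA (i : ℕ) (v : V) : Prop :=
  AFw G g0 i v ∧ ∀ k, AFw G g0 k v → k % 2 = i % 2 → i ≤ k

variable {G g0}

lemma AFw_zero {v : V} : AFw G g0 0 v ↔ v = g0 := by
  constructor
  · rintro ⟨w, hw⟩
    cases w with
    | nil => rfl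
    | cons h p => simp at hw
  · rintro rfl; exact ⟨.nil, rfl⟩

lemma AFw_succ {i : ℕ} {v : V} :
    AFw G g0 (i + 1) v ↔ ∃ u, G.Adj u v ∧ AFw G g0 i u := by
  constructor
  · rintro ⟨w, hw⟩
    have hrev : w.reverse.length = i + 1 := by simpa using hw
    cases hw' : w.reverse with
    | nil => rw [hw'] at hrev; simp at hrev
    | cons hadj p =>
      rw [hw'] at hrev
      simp [SimpleGraph.Walk.length_cons] at hrev
      exact ⟨_, hadj.symm, p.reverse, by simpa using hrev⟩
  · rintro ⟨u, hadj, w, hw⟩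
    exact ⟨w.concat hadj, by simp [SimpleGraph.Walk.length_concat, hw]⟩

lemma AFw_append {k : ℕ} {v0 v : V} (h : AFw G g0 k v0) (w : G.Walk v0 v) :
    AFw G g0 (k + w.length) v := by
  obtain ⟨w0, hw0⟩ := h
  exact ⟨w0.append w, by simp [SimpleGraph.Walk.length_append, hw0]⟩

lemma minA_unique {i k : ℕ} {v : V} (h1 : minA G g0 i v) (h2 : minA G g0 k v)
    (hp : i % 2 = k % 2) : i = k :=
  le_antisymm (h1.2 k h2.1 hp.symm) (h2.2 i h1.1 hp)

lemma minA_exists {v : V} {b : ℕ} (h : ∃ k, AFw G g0 k v ∧ k % 2 = b % 2) :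
    ∃ m, m % 2 = b % 2 ∧ minA G g0 m v := by
  classical
  refine ⟨Nat.find h, (Nat.find_spec h).2, (Nat.find_spec h).1, ?_⟩
  intro k hk hkp
  exact Nat.find_min' h ⟨hk, by rw [hkp, (Nat.find_spec h).2]⟩

lemma minA_step_down {i : ℕ} {v : V} (h : minA G g0 (i + 1) v) :
    ∃ u, G.Adj u v ∧ minA G g0 i u := by
  obtain ⟨u, hadj, hu⟩ := AFw_succ.mp h.1
  refine ⟨u, hadj, hu, ?_⟩
  intro k hk hkp
  have : i + 1 ≤ k + 1 :=
    h.2 (k + 1) (AFw_succ.mpr ⟨u, hadj, hk⟩) (by omega)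
  omega

end AFaux

/-- Corollary 3.11: if `G` is a non-bipartite connected graph with diameter
`d` and flooding starts from a single initial node `g0` of eccentricity `e`,
then flooding terminates after round `j` with `e < j ≤ e + d + 1`. -/
theorem amnesiac_flooding_nonbipartite_single_source_bounds
    {V : Type*} [Fintype V] (G : SimpleGraph V) (hconn : G.Connected)
    (g0 : V)
    (S : ℕ → V → V → Prop) (R : ℕ → Set V)
    (hS1 : ∀ g g' : V, S 1 g g' ↔ g = g0 ∧ G.Adj g g')
    (hS : ∀ i : ℕ, 1 ≤ i → ∀ g g' : V,
      S (i + 1) g g' ↔ G.Adj g g' ∧ (∃ h, S i h g) ∧ ¬ S i g' g)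
    (hR0 : R 0 = {g0})
    (hR : ∀ i : ℕ, 1 ≤ i → R i = {g : V | ∃ h, S i h g})
    (hnb : ¬ G.Colorable 2) :
    ∃ j : ℕ, (R j ≠ ∅ ∧ ∀ k : ℕ, j < k → R k = ∅) ∧
      Finset.univ.sup (fun g => G.dist g0 g) < j ∧
      j ≤ Finset.univ.sup (fun g => G.dist g0 g) +
            Finset.univ.sup (fun p : V × V => G.dist p.1 p.2) + 1 := by
  classical
  have hne : Nonempty V := by
    by_contra h
    rw [not_nonempty_iff] at h
    exact hnb ⟨SimpleGraph.Coloring.mk (fun v => isEmptyElim v)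
      (fun {a b} hab => isEmptyElim a)⟩
  -- every vertex admits walks from g0 of both parities
  have hboth : ∀ (v : V) (b : ℕ), ∃ k, AFaux.AFw G g0 k v ∧ k % 2 = b % 2 := by
    have hv0 : ∃ v0 : V, (∃ k, AFaux.AFw G g0 k v0 ∧ k % 2 = 0) ∧
        (∃ k, AFaux.AFw G g0 k v0 ∧ k % 2 = 1) := by
      by_contra hno
      push_neg at hno
      apply hnb
      refine ⟨SimpleGraph.Coloring.mk
        (fun v => if (∃ k, AFaux.AFw G g0 k v ∧ k % 2 = 1) then (1 : Fin 2) else 0) ?_⟩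
      intro a b hab heq
      obtain ⟨w⟩ := hconn.preconnected g0 a
      have hk : AFaux.AFw G g0 w.length a := ⟨w, rfl⟩
      by_cases ho : ∃ k, AFaux.AFw G g0 k a ∧ k % 2 = 1
      · obtain ⟨k, hk', hk1⟩ := ho
        have hbe : ∃ k, AFaux.AFw G g0 k b ∧ k % 2 = 0 :=
          ⟨k + 1, AFaux.AFw_succ.mpr ⟨a, hab, hk'⟩, by omega⟩
        have hbno : ¬ ∃ k, AFaux.AFw G g0 k b ∧ k % 2 = 1 := by
          push_neg
          exact hno b hbe
        simp [show ∃ k, AFaux.AFw G g0 k a ∧ k % 2 = 1 from ⟨k, hk', hk1⟩, hbno] at heq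
      · have hke : w.length % 2 = 0 := by
          rcases Nat.mod_two_eq_zero_or_one w.length with h | h
          · exact h
          · exact absurd ⟨w.length, hk, h⟩ ho
        have hbodd : ∃ k, AFaux.AFw G g0 k b ∧ k % 2 = 1 :=
          ⟨w.length + 1, AFaux.AFw_succ.mpr ⟨a, hab, hk⟩, by omega⟩
        simp [ho, hbodd] at heq
    obtain ⟨v0, he0, ho0⟩ := hv0
    intro v b
    obtain ⟨w⟩ := hconn.preconnected v0 v
    rcases Nat.mod_two_eq_zero_or_one (b + w.length) with hp | hp
    · obtain ⟨k, hk, hk0⟩ := he0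
      exact ⟨k + w.length, AFaux.AFw_append hk w, by omega⟩
    · obtain ⟨k, hk, hk1⟩ := ho0
      exact ⟨k + w.length, AFaux.AFw_append hk w, by omega⟩
  -- the key characterization of the send relation
  have key : ∀ (i : ℕ) (u v : V),
      S (i + 1) u v ↔ (G.Adj u v ∧ AFaux.minA G g0 i u ∧ AFaux.minA G g0 (i + 1) v) := by
    intro i
    induction i with
    | zero =>
      intro u v
      rw [hS1]
      constructor
      · rintro ⟨rfl, hadj⟩
        exact ⟨hadj, ⟨⟨.nil, rfl⟩, fun k _ _ => Nat.zero_le k⟩,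
          AFaux.AFw_succ.mpr ⟨u, hadj, ⟨.nil, rfl⟩⟩, fun k _ hp => by omega⟩
      · rintro ⟨hadj, hu, hv⟩
        exact ⟨AFaux.AFw_zero.mp hu.1, hadj⟩
    | succ i ih =>
      intro u v
      rw [hS (i + 1) (by omega)]
      have recv : ∀ w : V, (∃ hh, S (i + 1) hh w) ↔ AFaux.minA G g0 (i + 1) w := by
        intro w
        constructor
        · rintro ⟨hh, hhs⟩; exact ((ih hh w).mp hhs).2.2
        · intro hm
          obtain ⟨u', hadj, hu'⟩ := AFaux.minA_step_down hm
          exact ⟨u', (ih u' w).mpr ⟨hadj, hu', hm⟩⟩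
      rw [recv u]
      constructor
      · rintro ⟨hadj, hu, hnot⟩
        refine ⟨hadj, hu, ?_⟩
        have hnm : ¬ AFaux.minA G g0 i v := fun hm =>
          hnot ((ih v u).mpr ⟨hadj.symm, hm, hu⟩)
        refine ⟨AFaux.AFw_succ.mpr ⟨u, hadj, hu.1⟩, ?_⟩
        intro k hk hkp
        by_contra hlt
        push_neg at hlt
        have hki : k ≤ i := by omega
        rcases lt_or_eq_of_le hki with h1 | h2
        · have hku : AFaux.AFw G g0 (k + 1) u := AFaux.AFw_succ.mpr ⟨v, hadj.symm, hk⟩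
          have := hu.2 (k + 1) hku (by omega)
          omega
        · subst h2
          apply hnm
          refine ⟨hk, ?_⟩
          intro k' hk' hk'p
          by_contra hlt'
          push_neg at hlt'
          have hku : AFaux.AFw G g0 (k' + 1) u := AFaux.AFw_succ.mpr ⟨v, hadj.symm, hk'⟩
          have := hu.2 (k' + 1) hku (by omega)
          omega
      · rintro ⟨hadj, hu, hv⟩
        refine ⟨hadj, hu, ?_⟩
        intro hs
        have hmv : AFaux.minA G g0 i v := ((ih v u).mp hs).2.1
        have := AFaux.minA_unique hmv hv (by omega)
        omega
  have recv : ∀ (i : ℕ) (w : V), (∃ hh, S (i + 1) hh w) ↔ AFaux.minA G g0 (i + 1) w := by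
    intro i w
    constructor
    · rintro ⟨hh, hhs⟩; exact ((key i hh w).mp hhs).2.2
    · intro hm
      obtain ⟨u', hadj, hu'⟩ := AFaux.minA_step_down hm
      exact ⟨u', (key i u' w).mpr ⟨hadj, hu', hm⟩⟩
  -- the minimal parity-walk lengths
  have hmin : ∀ (v : V) (b : ℕ), ∃ m, m % 2 = b % 2 ∧ AFaux.minA G g0 m v :=
    fun v b => AFaux.minA_exists (hboth v b)
  choose Nm hNp hNm using hmin
  set e := Finset.univ.sup (fun g => G.dist g0 g) with he_def
  set d := Finset.univ.sup (fun p : V × V => G.dist p.1 p.2) with hd_def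
  set j := Finset.univ.sup (fun p : V × Bool => Nm p.1 p.2.toNat) with hj_def
  have hNle : ∀ (v : V) (b : ℕ), Nm v b ≤ j := by
    intro v b
    have h1 : Nm v b = Nm v ((decide (b % 2 = 1)).toNat) := by
      refine AFaux.minA_unique (hNm v b) (hNm v _) ?_
      rw [hNp, hNp]
      rcases Nat.mod_two_eq_zero_or_one b with h | h <;> simp [h]
    rw [h1, hj_def]
    exact Finset.le_sup (f := fun p : V × Bool => Nm p.1 p.2.toNat)
      (Finset.mem_univ (v, decide (b % 2 = 1)))
  -- lower bound : e < j
  obtain ⟨vs, -, hvs⟩ := Finset.exists_mem_eq_sup Finset.univ Finset.univ_nonempty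
    (fun g => G.dist g0 g)
  have hlow : e < j := by
    have hm := hNm vs (G.dist g0 vs + 1)
    have hp := hNp vs (G.dist g0 vs + 1)
    obtain ⟨w, hw⟩ := hm.1
    have hdl : G.dist g0 vs ≤ Nm vs (G.dist g0 vs + 1) := hw ▸ SimpleGraph.dist_le w
    have hle := hNle vs (G.dist g0 vs + 1)
    have hevs : e = G.dist g0 vs := by rw [he_def, hvs]
    omega
  have hj1 : 1 ≤ j := by omega
  -- an edge with equal distances to g0
  have hedge : ∃ x y, G.Adj x y ∧ G.dist g0 x = G.dist g0 y := by
    by_contra hno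
    push_neg at hno
    apply hnb
    refine ⟨SimpleGraph.Coloring.mk
      (fun v => (⟨G.dist g0 v % 2, Nat.mod_lt _ (by omega)⟩ : Fin 2)) ?_⟩
    intro a b hab
    have h1 : G.dist g0 a ≠ G.dist g0 b := hno a b hab
    have hd1 : G.dist a b = 1 := SimpleGraph.dist_eq_one_iff_adj.mpr hab
    have hd2 : G.dist b a = 1 := SimpleGraph.dist_eq_one_iff_adj.mpr hab.symm
    have h2 : G.dist g0 b ≤ G.dist g0 a + 1 := by
      have := hconn.dist_triangle (u := g0) (v := a) (w := b); omega
    have h3 : G.dist g0 a ≤ G.dist g0 b + 1 := by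
      have := hconn.dist_triangle (u := g0) (v := b) (w := a); omega
    simp only [ne_eq, Fin.mk.injEq]
    omega
  -- upper bound : j ≤ e + d + 1
  have hupp : j ≤ e + d + 1 := by
    rw [hj_def]
    refine Finset.sup_le ?_
    rintro ⟨v, b⟩ -
    show Nm v b.toNat ≤ e + d + 1
    obtain ⟨x, y, hxy, hdxy⟩ := hedge
    obtain ⟨wx, hwx⟩ := hconn.exists_walk_length_eq_dist g0 x
    obtain ⟨wy, hwy⟩ := hconn.exists_walk_length_eq_dist g0 y
    obtain ⟨wv, hwv⟩ := hconn.exists_walk_length_eq_dist x v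
    have hex : G.dist g0 x ≤ e := Finset.le_sup (Finset.mem_univ x)
    have hdv : G.dist x v ≤ d := Finset.le_sup (f := fun p : V × V => G.dist p.1 p.2)
      (Finset.mem_univ (x, v))
    have hparN : Nm v b.toNat % 2 = b.toNat % 2 := hNp v b.toNat
    by_cases hpar : (G.dist g0 x + G.dist x v) % 2 = b.toNat % 2
    · have hwalk : AFaux.AFw G g0 (G.dist g0 x + G.dist x v) v := by
        have := AFaux.AFw_append (G := G) (g0 := g0) (v0 := x) ⟨wx, hwx⟩ wv
        rwa [hwv] at this
      have := (hNm v b.toNat).2 _ hwalk (by omega)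
      omega
    · have hwalk : AFaux.AFw G g0 (G.dist g0 x + 1 + G.dist x v) v := by
        have h1 : AFaux.AFw G g0 (G.dist g0 x + 1) x := by
          refine ⟨wy.concat hxy.symm, ?_⟩
          rw [SimpleGraph.Walk.length_concat, hwy, hdxy]
        have := AFaux.AFw_append h1 wv
        rwa [hwv] at this
      have := (hNm v b.toNat).2 _ hwalk (by omega)
      omega
  -- assemble
  refine ⟨j, ⟨?_, ?_⟩, hlow, hupp⟩
  · obtain ⟨⟨vm, bm⟩, -, hjm⟩ := Finset.exists_mem_eq_sup Finset.univ Finset.univ_nonempty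
      (fun p : V × Bool => Nm p.1 p.2.toNat)
    rw [← hj_def] at hjm
    have hmj : AFaux.minA G g0 j vm := hjm ▸ hNm vm bm.toNat
    have hjj : j = (j - 1) + 1 := by omega
    have hmj' : AFaux.minA G g0 ((j - 1) + 1) vm := by rw [← hjj]; exact hmj
    have hsv : ∃ hh, S ((j - 1) + 1) hh vm := (recv _ vm).mpr hmj'
    rw [hjj, hR ((j - 1) + 1) (by omega)]
    intro h
    rw [Set.eq_empty_iff_forall_notMem] at h
    exact h vm hsv
  · intro k hk
    rw [hR k (by omega), Set.eq_empty_iff_forall_notMem]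
    intro g hg
    obtain ⟨k', rfl⟩ : ∃ k', k = k' + 1 := ⟨k - 1, by omega⟩
    have hmk : AFaux.minA G g0 (k' + 1) g := (recv k' g).mp hg
    have heq : k' + 1 = Nm g (k' + 1) :=
      AFaux.minA_unique hmk (hNm g (k' + 1)) (by rw [hNp])
    have := hNle g (k' + 1)
    omega
end

section
/- Let c : C_{2n} → V (with C_{2n} = ℤ/2nℤ, n ≥ 2, and c(i) adjacent to c(i+1) for all i) be an even flooding cycle. Under partial-send flooding, for every round j ≥ 0: the number of even i ∈ C_{2n} such that c(i) sends some message to c(i+1) in round j equals the number of even i ∈ C_{2n} such that c(i) sends some message to c(i-1) in round j; and likewise the number of odd i ∈ C_{2n} such that c(i) sends some message to c(i+1) in round j equals the number of odd i ∈ C_{2n} such that c(i) sends some message to c(i-1) in round j. -/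
set_option maxHeartbeats 1000000 in
/-- Lemma 4.3: for an even flooding cycle `c : ZMod (2n) → V` under
partial-send dynamic flooding, in every round the number of clockwise sends
from even points of the cycle equals the number of anticlockwise sends from
even points, and likewise for odd points. -/
theorem partial_send_cycle_balance
    {V : Type*} [Fintype V] (G : SimpleGraph V)
    (H : Set ℕ) (S : ℕ → ℕ → V → V → Prop) (x : ℕ → V) (ini : ℕ → ℕ)
    (hmem : ∀ h i (g g' : V), S h i g g' → h ∈ H)
    (hAdj : ∀ h i (g g' : V), S h i g g' → G.Adj g g')
    (hS0 : ∀ h (g g' : V), ¬ S h 0 g g')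
    (hdistinct : ∀ h ∈ H, ∀ h' ∈ H, h ≠ h' → (x h, ini h) ≠ (x h', ini h'))
    (hnoRecvInit : ∀ h ∈ H, ∀ h' (g : V), ¬ S h' (ini h) g (x h))
    (hInit : ∀ h ∈ H, ∀ g' : V, G.Adj (x h) g' → S h (ini h + 1) (x h) g')
    (hRecvSend : ∀ i : ℕ, 0 < i → ∀ g : V, (∃ h g', S h i g' g) →
      ∃ h', (∃ g', S h' i g' g) ∧
        (∀ g'' : V, S h' (i + 1) g g'' ↔
          (G.Adj g g'' ∧ ∀ h, ¬ S h i g'' g)) ∧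
        (∀ h, h ≠ h' → ∀ g'' : V, ¬ S h (i + 1) g g''))
    (hQuiet : ∀ (i : ℕ) (g : V), (∀ h (g' : V), ¬ S h i g' g) →
      (∀ h ∈ H, ¬ (g = x h ∧ ini h = i)) →
      ∀ h (g' : V), ¬ S h (i + 1) g g')
    (n : ℕ) (hn : 2 ≤ n) [NeZero (2 * n)]
    (c : ZMod (2 * n) → V) (hc : ∀ i : ZMod (2 * n), G.Adj (c i) (c (i + 1))) :
    ∀ j : ℕ,
      {i : ZMod (2 * n) | Even i.val ∧ ∃ h, S h j (c i) (c (i + 1))}.ncard =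
        {i : ZMod (2 * n) | Even i.val ∧ ∃ h, S h j (c i) (c (i - 1))}.ncard ∧
      {i : ZMod (2 * n) | ¬ Even i.val ∧ ∃ h, S h j (c i) (c (i + 1))}.ncard =
        {i : ZMod (2 * n) | ¬ Even i.val ∧ ∃ h, S h j (c i) (c (i - 1))}.ncard := by
  classical
  -- characterization of sends in round j+1
  have key : ∀ (j : ℕ) (g g'' : V), (∃ h, S h (j+1) g g'') ↔
      (((∃ h g', S h j g' g) ∨ (∃ h, h ∈ H ∧ g = x h ∧ ini h = j)) ∧
        G.Adj g g'' ∧ ¬ ∃ h, S h j g'' g) := by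
    intro j g g''
    constructor
    · rintro ⟨h0, hs⟩
      have hadj := hAdj _ _ _ _ hs
      by_cases hrecv : ∃ h g', S h j g' g
      · have hj : 0 < j := by
          rcases hrecv with ⟨h1, g1, hs1⟩
          rcases Nat.eq_zero_or_pos j with rfl | hj
          · exact absurd hs1 (hS0 _ _ _)
          · exact hj
        obtain ⟨h', ⟨g', hg'⟩, hiff, hother⟩ := hRecvSend j hj g hrecv
        have h0h' : h0 = h' := by
          by_contra hne; exact hother h0 hne g'' hs
        subst h0h'
        have h2 := (hiff g'').mp hs
        exact ⟨Or.inl hrecv, hadj, fun ⟨h, hh⟩ => h2.2 h hh⟩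
      · by_cases hinit : ∃ h, h ∈ H ∧ g = x h ∧ ini h = j
        · obtain ⟨h1, hH1, hg, hini⟩ := hinit
          refine ⟨Or.inr ⟨h1, hH1, hg, hini⟩, hadj, ?_⟩
          rintro ⟨h2, hs2⟩
          exact hnoRecvInit h1 hH1 h2 g'' (by rw [hini]; rw [hg] at hs2; exact hs2)
        · exact absurd hs (hQuiet j g (fun h g' hsg => hrecv ⟨h, g', hsg⟩)
            (fun h hh hc' => hinit ⟨h, hh, hc'.1, hc'.2⟩) h0 g'')
    · rintro ⟨hact, hadj, hnorecv⟩
      by_cases hrecv : ∃ h g', S h j g' g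
      · have hj : 0 < j := by
          rcases hrecv with ⟨h1, g1, hs1⟩
          rcases Nat.eq_zero_or_pos j with rfl | hj
          · exact absurd hs1 (hS0 _ _ _)
          · exact hj
        obtain ⟨h', _, hiff, _⟩ := hRecvSend j hj g hrecv
        exact ⟨h', (hiff g'').mpr ⟨hadj, fun h hh => hnorecv ⟨h, hh⟩⟩⟩
      · rcases hact with h | ⟨h1, hH1, hg, hini⟩
        · exact absurd h hrecv
        · refine ⟨h1, ?_⟩
          have := hInit h1 hH1 g'' (by rw [← hg]; exact hadj)
          rw [hini, ← hg] at this
          exact this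
  -- parity flip
  have flip : ∀ i : ZMod (2*n), Even (i + 1).val ↔ ¬ Even i.val := by
    intro i
    haveI : Fact ((1 : ℕ) < 2 * n) := ⟨by omega⟩
    have hv : (i + 1).val = (i.val + 1) % (2 * n) := by
      rw [ZMod.val_add, ZMod.val_one]
    have hlt : i.val < 2 * n := ZMod.val_lt i
    rcases lt_or_ge (i.val + 1) (2 * n) with hl | hg
    · rw [hv, Nat.mod_eq_of_lt hl, Nat.even_add_one]
    · have he : i.val = 2 * n - 1 := by omega
      rw [hv, he]
      have h2 : (2 * n - 1 + 1) % (2 * n) = 0 := by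
        have h3 : 2 * n - 1 + 1 = 2 * n := by omega
        rw [h3, Nat.mod_self]
      rw [h2]
      simp only [Even.zero, true_iff]
      rintro ⟨k, hk⟩
      omega
  -- shift bijection for cardinalities
  have shift_card : ∀ (Q : ZMod (2*n) → Prop) (s : ZMod (2*n)) (P P' : ZMod (2*n) → Prop),
      (∀ i, P i ↔ P' (i + s)) →
      {i | P i ∧ Q (i + s)}.ncard = {k | P' k ∧ Q k}.ncard := by
    intro Q s P P' hPP'
    have himg : (fun i => i + s) '' {i | P i ∧ Q (i + s)} = {k | P' k ∧ Q k} := by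
      ext k
      constructor
      · rintro ⟨i, ⟨hP, hQ⟩, rfl⟩
        exact ⟨(hPP' i).mp hP, hQ⟩
      · rintro ⟨hP', hQ⟩
        refine ⟨k - s, ⟨(hPP' _).mpr (by rw [sub_add_cancel]; exact hP'),
          by rw [sub_add_cancel]; exact hQ⟩, show k - s + s = k from sub_add_cancel k s⟩
    rw [← himg, Set.ncard_image_of_injective _ (add_left_injective s)]
  -- splitting count
  have split : ∀ (P A X Y : ZMod (2*n) → Prop), (∀ i, Y i ↔ A i ∧ ¬ X i) → (∀ i, X i → A i) →
      {i | P i ∧ A i}.ncard = {i | P i ∧ Y i}.ncard + {i | P i ∧ X i}.ncard := by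
    intro P A X Y hY hXA
    have hset : {i | P i ∧ A i} = {i | P i ∧ Y i} ∪ {i | P i ∧ X i} := by
      ext i
      simp only [Set.mem_setOf_eq, Set.mem_union]
      have hy := hY i
      have hx := hXA i
      tauto
    rw [hset, Set.ncard_union_eq ?_ (Set.toFinite _) (Set.toFinite _)]
    rw [Set.disjoint_left]
    rintro i ⟨hP, hYi⟩ ⟨_, hXi⟩
    exact ((hY i).mp hYi).2 hXi
  -- one induction step
  have step : ∀ (P Q : ZMod (2*n) → Prop),
      (∀ i, P i ↔ Q (i+1)) → (∀ i, P (i+1) ↔ Q i) →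
      ∀ j, {i | Q i ∧ ∃ h, S h j (c i) (c (i+1))}.ncard =
             {i | Q i ∧ ∃ h, S h j (c i) (c (i-1))}.ncard →
      {i | P i ∧ ∃ h, S h (j+1) (c i) (c (i+1))}.ncard =
        {i | P i ∧ ∃ h, S h (j+1) (c i) (c (i-1))}.ncard := by
    intro P Q hPQ1 hPQ2 j hbal
    set A : ZMod (2*n) → Prop :=
      fun i => (∃ h g', S h j g' (c i)) ∨ (∃ h, h ∈ H ∧ c i = x h ∧ ini h = j) with hA
    set TT : ZMod (2*n) → Prop := fun k => ∃ h, S h j (c k) (c (k+1)) with hTT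
    set UU : ZMod (2*n) → Prop := fun k => ∃ h, S h j (c k) (c (k-1)) with hUU
    have hT : ∀ i, (∃ h, S h (j+1) (c i) (c (i+1))) ↔ (A i ∧ ¬ UU (i+1)) := by
      intro i
      rw [key j (c i) (c (i+1))]
      have he : UU (i+1) ↔ ∃ h, S h j (c (i+1)) (c i) := by
        rw [hUU]; simp only [add_sub_cancel_right]
      constructor
      · rintro ⟨hact, -, hnr⟩
        exact ⟨hact, fun hu => hnr (he.mp hu)⟩
      · rintro ⟨hact, hnu⟩
        exact ⟨hact, hc i, fun hr => hnu (he.mpr hr)⟩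
    have hU : ∀ i, (∃ h, S h (j+1) (c i) (c (i-1))) ↔ (A i ∧ ¬ TT (i-1)) := by
      intro i
      rw [key j (c i) (c (i-1))]
      have hadj : G.Adj (c i) (c (i-1)) := by
        have h5 := hc (i-1); rw [sub_add_cancel] at h5; exact h5.symm
      have he : TT (i-1) ↔ ∃ h, S h j (c (i-1)) (c i) := by
        rw [hTT]; simp only [sub_add_cancel]
      constructor
      · rintro ⟨hact, -, hnr⟩
        exact ⟨hact, fun ht => hnr (he.mp ht)⟩
      · rintro ⟨hact, hnt⟩
        exact ⟨hact, hadj, fun hr => hnt (he.mpr hr)⟩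
    have hXA1 : ∀ i, UU (i+1) → A i := by
      intro i hu
      rw [hUU] at hu
      simp only [add_sub_cancel_right] at hu
      obtain ⟨h, hs⟩ := hu
      exact Or.inl ⟨h, c (i+1), hs⟩
    have hXA2 : ∀ i, TT (i-1) → A i := by
      intro i ht
      rw [hTT] at ht
      simp only [sub_add_cancel] at ht
      obtain ⟨h, hs⟩ := ht
      exact Or.inl ⟨h, c (i-1), hs⟩
    have h1 : {i | P i ∧ A i}.ncard
        = {i | P i ∧ ∃ h, S h (j+1) (c i) (c (i+1))}.ncard + {i | P i ∧ UU (i+1)}.ncard :=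
      split P A (fun i => UU (i+1)) (fun i => ∃ h, S h (j+1) (c i) (c (i+1))) hT hXA1
    have h2 : {i | P i ∧ A i}.ncard
        = {i | P i ∧ ∃ h, S h (j+1) (c i) (c (i-1))}.ncard + {i | P i ∧ TT (i-1)}.ncard :=
      split P A (fun i => TT (i-1)) (fun i => ∃ h, S h (j+1) (c i) (c (i-1))) hU hXA2
    have h3 : {i | P i ∧ UU (i+1)}.ncard = {k | Q k ∧ UU k}.ncard :=
      shift_card UU 1 P Q hPQ1
    have h4 : {i | P i ∧ TT (i-1)}.ncard = {k | Q k ∧ TT k}.ncard := by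
      have h' : ∀ i, P i ↔ Q (i + (-1)) := by
        intro i
        have h6 := hPQ2 (i - 1)
        rw [sub_add_cancel] at h6
        rw [h6, sub_eq_add_neg]
      have hset : {i | P i ∧ TT (i - 1)} = {i | P i ∧ TT (i + (-1))} := by
        ext i
        rw [Set.mem_setOf_eq, Set.mem_setOf_eq, sub_eq_add_neg]
      rw [hset]
      exact shift_card TT (-1) P Q h'
    have hbal' : {k | Q k ∧ TT k}.ncard = {k | Q k ∧ UU k}.ncard := hbal
    omega
  intro j
  induction j with
  | zero =>
    have hz : ∀ (s : Set (ZMod (2*n))), (∀ i, i ∉ s) → s.ncard = 0 := by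
      intro s hs
      rw [Set.eq_empty_iff_forall_notMem.mpr hs, Set.ncard_empty]
    constructor <;>
      refine (hz _ ?_).trans (hz _ ?_).symm <;>
      · rintro i ⟨-, h, hs⟩
        exact hS0 _ _ _ hs
  | succ j ih =>
    refine ⟨?_, ?_⟩
    · refine step (fun i => Even i.val) (fun i => ¬ Even i.val) ?_ ?_ j ih.2
      · intro i; show Even i.val ↔ ¬ Even (i+1).val; rw [flip i, not_not]
      · intro i; show Even (i+1).val ↔ ¬ Even i.val; exact flip i
    · refine step (fun i => ¬ Even i.val) (fun i => Even i.val) ?_ ?_ j ih.1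
      · intro i; show ¬ Even i.val ↔ Even (i+1).val; exact (flip i).symm
      · intro i; show ¬ Even (i+1).val ↔ Even i.val; rw [flip i, not_not]
end

section
/- Amnesiac flooding of a single message from multiple sources initiating in possibly different rounds always terminates: there is a round J such that no node sends the message in any round ≥ J. -/
/-!
Let `D t v = activeCount t v` count the rounds `s ≤ t - 2` with `s ≡ t (mod 2)` in which `v`
receives or initiates. Along every edge `uv`, `D (t + 1) u = D t v + [u sends to v in round t]`.
Hence if `v` receives in round `t + 1` from a node `u` that itself received in round `t`, then
`D t u = D (t + 1) v`: `D` is constant along backward chains of receptions, which can only stop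
at an initiation. On the other hand `D · w` strictly increases between two receptions of `w` in
rounds of equal parity, so such a chain meets every pair (node, parity) at most once. After the
last initiation round every chain, hence every reception, therefore ends within `2 |V|` rounds.
-/

namespace AmnesiacFlooding

variable {V : Type*}

def Receives (S : ℕ → V → V → Prop) (t : ℕ) (v : V) : Prop := ∃ u, S t u v

def IsActive (S : ℕ → V → V → Prop) (I : Set V) (r : V → ℕ) (t : ℕ) (v : V) : Prop :=
  Receives S t v ∨ (v ∈ I ∧ r v = t)

structure IsFlooding (G : SimpleGraph V) (I : Set V) (r : V → ℕ) (S : ℕ → V → V → Prop) :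
    Prop where
  not_send_zero : ∀ u v, ¬ S 0 u v
  send_succ_iff : ∀ t u v, S (t + 1) u v ↔ G.Adj u v ∧ IsActive S I r t u ∧ ¬ S t v u

open Classical in
noncomputable def activeCount (S : ℕ → V → V → Prop) (I : Set V) (r : V → ℕ) : ℕ → V → ℕ
  | 0, _ => 0
  | 1, _ => 0
  | t + 2, v => activeCount S I r t v + if IsActive S I r t v then 1 else 0

variable {G : SimpleGraph V} {I : Set V} {r : V → ℕ} {S : ℕ → V → V → Prop}

theorem IsFlooding.of_rounds
    (hS0 : ∀ g g' : V, ¬ S 0 g g')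
    (hS1 : ∀ g g' : V, S 1 g g' ↔ (g ∈ I ∧ r g = 0 ∧ G.Adj g g'))
    (hS : ∀ i : ℕ, 1 ≤ i → ∀ g g' : V,
      S (i + 1) g g' ↔
        ((g ∈ I ∧ r g = i ∧ G.Adj g g') ∨
         (G.Adj g g' ∧ (∃ h, S i h g) ∧ ¬ S i g' g)))
    (hnoRecvInit : ∀ g ∈ I, ∀ g' : V, ¬ S (r g) g' g) :
    IsFlooding G I r S where
  not_send_zero := hS0
  send_succ_iff t u v := by
    cases t with
    | zero =>
      simp only [hS1, IsActive, Receives, hS0, exists_false, false_or, not_false_eq_true, and_true]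
      tauto
    | succ t =>
      rw [hS (t + 1) t.succ_pos u v]
      constructor
      · rintro (⟨hu, hru, huv⟩ | ⟨huv, hrecv, hvu⟩)
        · exact ⟨huv, Or.inr ⟨hu, hru⟩, hru ▸ hnoRecvInit u hu v⟩
        · exact ⟨huv, Or.inl hrecv, hvu⟩
      · rintro ⟨huv, hrecv | ⟨hu, hru⟩, hvu⟩
        · exact Or.inr ⟨huv, hrecv, hvu⟩
        · exact Or.inl ⟨hu, hru, huv⟩

theorem activeCount_add_two_of_isActive {t : ℕ} {v : V} (h : IsActive S I r t v) :
    activeCount S I r (t + 2) v = activeCount S I r t v + 1 := by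
  simp [activeCount, h]

theorem activeCount_le_add_two_mul (t k : ℕ) (v : V) :
    activeCount S I r t v ≤ activeCount S I r (t + 2 * k) v := by
  induction k with
  | zero => rfl
  | succ k ih =>
    rw [Nat.mul_succ, ← add_assoc, activeCount]
    omega

theorem activeCount_lt_of_receives {s : ℕ} {v : V} (h : Receives S s v) (k : ℕ) :
    activeCount S I r s v < activeCount S I r (s + 2 * (k + 1)) v :=
  calc activeCount S I r s v
      < activeCount S I r (s + 2) v := by rw [activeCount_add_two_of_isActive (Or.inl h)]; omega
    _ ≤ activeCount S I r (s + 2 + 2 * k) v := activeCount_le_add_two_mul _ _ _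
    _ = activeCount S I r (s + 2 * (k + 1)) v := by ring_nf

open Classical in
theorem IsFlooding.activeCount_succ (hF : IsFlooding G I r S) (t : ℕ) {u v : V}
    (huv : G.Adj u v) :
    activeCount S I r (t + 1) u = activeCount S I r t v + if S t u v then 1 else 0 := by
  induction t generalizing u v with
  | zero => simp [activeCount, hF.not_send_zero]
  | succ t ih =>
    -- An active `u` either got the message from `v` in round `t` or sends it to `v` in round `t + 1`.
    have hvu_active : S t v u → IsActive S I r t u := fun h => Or.inl ⟨v, h⟩
    rw [activeCount, ih huv.symm, hF.send_succ_iff, and_iff_right huv]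
    by_cases hu : IsActive S I r t u <;> by_cases hvu : S t v u <;> simp_all

theorem IsFlooding.exists_receives_activeCount_eq (hF : IsFlooding G I r S) {t : ℕ} {v : V}
    (hr : ∀ x ∈ I, r x ≠ t) (h : Receives S (t + 1) v) :
    ∃ u, Receives S t u ∧ activeCount S I r t u = activeCount S I r (t + 1) v := by
  obtain ⟨u, huv⟩ := h
  obtain ⟨hadj, hu | ⟨hI, hrt⟩, -⟩ := (hF.send_succ_iff t u v).1 huv
  · refine ⟨u, hu, ?_⟩
    have hsucc := hF.activeCount_succ (t + 1) hadj
    rw [if_pos huv, activeCount_add_two_of_isActive (Or.inl hu)] at hsucc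
    omega
  · exact absurd hrt (hr u hI)

theorem IsFlooding.exists_receives_chain (hF : IsFlooding G I r S) {t m : ℕ} {v : V}
    (hr : ∀ x ∈ I, r x < t) (h : Receives S (t + m) v) :
    ∀ j ≤ m, ∃ u, Receives S (t + j) u ∧
      activeCount S I r (t + j) u = activeCount S I r (t + m) v := by
  induction m generalizing v with
  | zero => exact fun j hj => ⟨v, by simpa [Nat.le_zero.1 hj] using h⟩
  | succ m ih =>
    obtain ⟨u, hu, hcount⟩ :=
      hF.exists_receives_activeCount_eq (fun x hx => (hr x hx).trans_le le_self_add |>.ne) h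
    intro j hj
    rcases hj.lt_or_eq with hj | rfl
    · obtain ⟨w, hw, hcount'⟩ := ih hu j (Nat.lt_succ_iff.1 hj)
      exact ⟨w, hw, hcount'.trans hcount⟩
    · exact ⟨v, h, rfl⟩

theorem succ_le_two_mul_card [Fintype V] {m : ℕ} (c : ℕ → V)
    (hc : ∀ i j, i < j → j ≤ m → i % 2 = j % 2 → c i ≠ c j) :
    m + 1 ≤ 2 * Fintype.card V := by
  have hinj : Function.Injective
      fun j : Fin (m + 1) => (c j, (⟨j % 2, Nat.mod_lt _ two_pos⟩ : Fin 2)) := by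
    intro i j hij
    simp only [Prod.mk.injEq, Fin.mk.injEq] at hij
    by_contra hne
    rcases lt_or_gt_of_ne (Fin.val_injective.ne hne) with hlt | hlt
    · exact hc i j hlt (Nat.lt_succ_iff.1 j.2) hij.2 hij.1
    · exact hc j i hlt (Nat.lt_succ_iff.1 i.2) hij.2.symm hij.1.symm
  simpa [mul_comm] using Fintype.card_le_of_injective _ hinj

theorem IsFlooding.lt_two_mul_card_of_receives [Fintype V] (hF : IsFlooding G I r S)
    {t m : ℕ} {v : V} (hr : ∀ x ∈ I, r x < t) (h : Receives S (t + m) v) :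
    m < 2 * Fintype.card V := by
  have : Nonempty V := ⟨v⟩
  choose! c hc hcount using hF.exists_receives_chain hr h
  refine succ_le_two_mul_card c fun i j hij hjm hpar hcij => ?_
  obtain ⟨k, rfl⟩ : ∃ k, j = i + 2 * (k + 1) := ⟨(j - i) / 2 - 1, by omega⟩
  have hlt := activeCount_lt_of_receives (I := I) (r := r) (hc i (by omega)) k
  rw [hcount i (by omega), hcij, add_assoc, hcount _ hjm] at hlt
  exact lt_irrefl _ hlt

end AmnesiacFlooding

theorem multi_source_multi_round_flooding_terminates_general
    {V : Type*} [Fintype V] (G : SimpleGraph V)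
    (I : Set V) (r : V → ℕ)
    (S : ℕ → V → V → Prop)
    (hS0 : ∀ g g' : V, ¬ S 0 g g')
    (hS1 : ∀ g g' : V, S 1 g g' ↔ (g ∈ I ∧ r g = 0 ∧ G.Adj g g'))
    (hS : ∀ i : ℕ, 1 ≤ i → ∀ g g' : V,
      S (i + 1) g g' ↔
        ((g ∈ I ∧ r g = i ∧ G.Adj g g') ∨
         (G.Adj g g' ∧ (∃ h, S i h g) ∧ ¬ S i g' g)))
    (hnoRecvInit : ∀ g ∈ I, ∀ g' : V, ¬ S (r g) g' g) :
    ∃ J : ℕ, ∀ i : ℕ, J ≤ i → ∀ g g' : V, ¬ S i g g' := by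
  have hF := AmnesiacFlooding.IsFlooding.of_rounds hS0 hS1 hS hnoRecvInit
  set t := Finset.univ.sup r + 1
  have hr : ∀ x ∈ I, r x < t := fun x _ => Nat.lt_succ_of_le (Finset.le_sup (Finset.mem_univ x))
  refine ⟨t + 2 * Fintype.card V, fun i hi g g' hsend => ?_⟩
  obtain ⟨m, rfl⟩ := Nat.exists_eq_add_of_le (le_of_add_le_left hi)
  have := hF.lt_two_mul_card_of_receives hr ⟨g, hsend⟩
  omega

/-- Corollary 4.5: amnesiac flooding of a single message from multiple
sources, initiating in possibly different rounds, always terminates. -/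
theorem multi_source_multi_round_flooding_terminates
    {V : Type*} [Fintype V] (G : SimpleGraph V)
    (I : Set V) (hI : I.Nonempty) (r : V → ℕ)
    (S : ℕ → V → V → Prop)
    (hS0 : ∀ g g' : V, ¬ S 0 g g')
    (hS1 : ∀ g g' : V, S 1 g g' ↔ (g ∈ I ∧ r g = 0 ∧ G.Adj g g'))
    (hS : ∀ i : ℕ, 1 ≤ i → ∀ g g' : V,
      S (i + 1) g g' ↔
        ((g ∈ I ∧ r g = i ∧ G.Adj g g') ∨
         (G.Adj g g' ∧ (∃ h, S i h g) ∧ ¬ S i g' g)))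
    (hnoRecvInit : ∀ g ∈ I, ∀ g' : V, ¬ S (r g) g' g) :
    ∃ J : ℕ, ∀ i : ℕ, J ≤ i → ∀ g g' : V, ¬ S i g g' :=
  multi_source_multi_round_flooding_terminates_general G I r S hS0 hS1 hS hnoRecvInit
end

section
/- Let G be flooded with a single message from round 1 by the standard amnesiac flooding rule from initial set I, and suppose node g is a sink node in round i, i.e. every neighbour of g sends the message to g in round i. Consider the modified flooding that follows the standard rule in every round except that in round i+1 node g sends the message to all of its neighbours. Then the modified flooding process terminates: there is a round J such that no node sends the message in any round ≥ J. -/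
namespace AmnesiacAux

open SimpleGraph

variable {V : Type*} {G : SimpleGraph V} {I : Set V} {g : V}

/-- There is a walk of length `n` from the initial set `I` to `v`. -/
def A (G : SimpleGraph V) (I : Set V) (n : ℕ) (v : V) : Prop :=
  ∃ u ∈ I, ∃ w : G.Walk u v, w.length = n

/-- There is a walk of length `n` from `g` to `v`. -/
def B (G : SimpleGraph V) (g : V) (n : ℕ) (v : V) : Prop :=
  ∃ w : G.Walk g v, w.length = n

/-- `n` is minimal in its parity class with `A n v`. -/
def mA (G : SimpleGraph V) (I : Set V) (n : ℕ) (v : V) : Prop :=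
  A G I n v ∧ ∀ k j : ℕ, n = k + 2 * j + 2 → ¬ A G I k v

/-- `n` is minimal in its parity class with `B n v`. -/
def mB (G : SimpleGraph V) (g : V) (n : ℕ) (v : V) : Prop :=
  B G g n v ∧ ∀ k j : ℕ, n = k + 2 * j + 2 → ¬ B G g k v

lemma A_zero {v : V} : A G I 0 v ↔ v ∈ I := by
  constructor
  · rintro ⟨u, hu, w, hw⟩
    rwa [← Walk.eq_of_length_eq_zero hw]
  · intro hv; exact ⟨v, hv, Walk.nil, rfl⟩

lemma B_zero {v : V} : B G g 0 v ↔ v = g := by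
  constructor
  · rintro ⟨w, hw⟩
    exact (Walk.eq_of_length_eq_zero hw).symm
  · rintro rfl; exact ⟨Walk.nil, rfl⟩

/-- Decompose a walk of length `n+1` at its last edge. -/
lemma walk_decomp {u v : V} (w : G.Walk u v) {n : ℕ} (h : w.length = n + 1) :
    ∃ x, G.Adj x v ∧ ∃ q : G.Walk u x, q.length = n := by
  have h' : w.reverse.length = n + 1 := by rw [Walk.length_reverse]; exact h
  cases hw : w.reverse with
  | nil => rw [hw] at h'; simp at h'
  | cons hadj q =>
    rw [hw] at h'
    simp only [Walk.length_cons] at h'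
    rename_i x
    exact ⟨x, hadj.symm, q.reverse, by rw [Walk.length_reverse]; omega⟩

lemma A_succ {n : ℕ} {v : V} : A G I (n + 1) v ↔ ∃ x, G.Adj x v ∧ A G I n x := by
  constructor
  · rintro ⟨u, hu, w, hw⟩
    obtain ⟨x, hadj, q, hq⟩ := walk_decomp w hw
    exact ⟨x, hadj, u, hu, q, hq⟩
  · rintro ⟨x, hadj, u, hu, q, hq⟩
    exact ⟨u, hu, q.concat hadj, by rw [Walk.length_concat, hq]⟩

lemma B_succ {n : ℕ} {v : V} : B G g (n + 1) v ↔ ∃ x, G.Adj x v ∧ B G g n x := by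
  constructor
  · rintro ⟨w, hw⟩
    obtain ⟨x, hadj, q, hq⟩ := walk_decomp w hw
    exact ⟨x, hadj, q, hq⟩
  · rintro ⟨x, hadj, q, hq⟩
    exact ⟨q.concat hadj, by rw [Walk.length_concat, hq]⟩

/-- Concatenate an `A`-walk to `g` with a `B`-walk. -/
lemma A_comp {n m : ℕ} {v : V} (hA : A G I n g) (hB : B G g m v) : A G I (n + m) v := by
  obtain ⟨u, hu, w1, h1⟩ := hA
  obtain ⟨w2, h2⟩ := hB
  exact ⟨u, hu, w1.append w2, by rw [Walk.length_append, h1, h2]⟩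

/-- Extend an `A`-walk by a further walk. -/
lemma A_extend {n : ℕ} {x v : V} (h : A G I n x) (w : G.Walk x v) :
    A G I (n + w.length) v := by
  obtain ⟨u, hu, q, hq⟩ := h
  exact ⟨u, hu, q.append w, by rw [Walk.length_append, hq]⟩

/-- Decompose a `B`-walk at its first edge. -/
lemma B_cons {n : ℕ} {v : V} (h : B G g (n + 1) v) :
    ∃ x, G.Adj g x ∧ ∃ q : G.Walk x v, q.length = n := by
  obtain ⟨w, hw⟩ := h
  cases w with
  | nil => simp at hw
  | cons hadj q =>
    simp only [Walk.length_cons] at hw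
    exact ⟨_, hadj, q, by omega⟩

/-- Any reachable parity class has a minimal witness. -/
lemma mA_min {n : ℕ} {v : V} (h : A G I n v) :
    ∃ m j : ℕ, mA G I m v ∧ n = m + 2 * j := by
  induction n using Nat.strong_induction_on with
  | _ n ih =>
    by_cases hmin : ∀ k j : ℕ, n = k + 2 * j + 2 → ¬ A G I k v
    · exact ⟨n, 0, ⟨h, hmin⟩, by omega⟩
    · push_neg at hmin
      obtain ⟨k, j, hk, hA⟩ := hmin
      obtain ⟨m, j', hm, hkm⟩ := ih k (by omega) hA
      exact ⟨m, j' + j + 1, hm, by omega⟩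

lemma mB_min {n : ℕ} {v : V} (h : B G g n v) :
    ∃ m j : ℕ, mB G g m v ∧ n = m + 2 * j := by
  induction n using Nat.strong_induction_on with
  | _ n ih =>
    by_cases hmin : ∀ k j : ℕ, n = k + 2 * j + 2 → ¬ B G g k v
    · exact ⟨n, 0, ⟨h, hmin⟩, by omega⟩
    · push_neg at hmin
      obtain ⟨k, j, hk, hB⟩ := hmin
      obtain ⟨m, j', hm, hkm⟩ := ih k (by omega) hB
      exact ⟨m, j' + j + 1, hm, by omega⟩

/-- Predecessor of a minimal `A`-witness. -/
lemma mA_pred {n : ℕ} {v : V} (h : mA G I (n + 1) v) :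
    ∃ x, G.Adj x v ∧ mA G I n x := by
  obtain ⟨x, hadj, hA⟩ := A_succ.mp h.1
  refine ⟨x, hadj, hA, fun k j hkj hAk => ?_⟩
  exact h.2 (k + 1) j (by omega) (A_succ.mpr ⟨x, hadj, hAk⟩)

lemma mB_pred {n : ℕ} {v : V} (h : mB G g (n + 1) v) :
    ∃ x, G.Adj x v ∧ mB G g n x := by
  obtain ⟨x, hadj, hB⟩ := B_succ.mp h.1
  refine ⟨x, hadj, hB, fun k j hkj hBk => ?_⟩
  exact h.2 (k + 1) j (by omega) (B_succ.mpr ⟨x, hadj, hBk⟩)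

/-- Dichotomy: a neighbour of a node with minimal value `n` has minimal value
`n+1` or `n-1`. -/
lemma mA_step {n : ℕ} {a b : V} (hadj : G.Adj a b) (h : mA G I n a) :
    mA G I (n + 1) b ∨ ∃ r, n = r + 1 ∧ mA G I r b := by
  have hA : A G I (n + 1) b := A_succ.mpr ⟨a, hadj, h.1⟩
  obtain ⟨m, j, hm, hmj⟩ := mA_min hA
  rcases Nat.eq_zero_or_pos j with hj | hj
  · left; subst hj; simpa [show m = n + 1 by omega] using hm
  · right
    have hA' : A G I (m + 1) a := A_succ.mpr ⟨b, hadj.symm, hm.1⟩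
    by_cases hj2 : 2 ≤ j
    · exact absurd hA' (h.2 (m + 1) (j - 2) (by omega))
    · exact ⟨m, by omega, hm⟩

lemma mB_step {n : ℕ} {a b : V} (hadj : G.Adj a b) (h : mB G g n a) :
    mB G g (n + 1) b ∨ ∃ r, n = r + 1 ∧ mB G g r b := by
  have hB : B G g (n + 1) b := B_succ.mpr ⟨a, hadj, h.1⟩
  obtain ⟨m, j, hm, hmj⟩ := mB_min hB
  rcases Nat.eq_zero_or_pos j with hj | hj
  · left; subst hj; simpa [show m = n + 1 by omega] using hm
  · right
    have hB' : B G g (m + 1) a := B_succ.mpr ⟨b, hadj.symm, hm.1⟩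
    by_cases hj2 : 2 ≤ j
    · exact absurd hB' (h.2 (m + 1) (j - 2) (by omega))
    · exact ⟨m, by omega, hm⟩

/-- Minimal witnesses with the same parity are equal. -/
lemma mA_unique {n n' : ℕ} {v : V} (h : mA G I n v) (h' : mA G I n' v)
    (hp : n % 2 = n' % 2) : n = n' := by
  rcases lt_trichotomy n n' with hlt | heq | hlt
  · exact absurd h.1 (h'.2 n ((n' - n - 2) / 2) (by omega))
  · exact heq
  · exact absurd h'.1 (h.2 n' ((n - n' - 2) / 2) (by omega))

lemma mB_unique {n n' : ℕ} {v : V} (h : mB G g n v) (h' : mB G g n' v)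
    (hp : n % 2 = n' % 2) : n = n' := by
  rcases lt_trichotomy n n' with hlt | heq | hlt
  · exact absurd h.1 (h'.2 n ((n' - n - 2) / 2) (by omega))
  · exact heq
  · exact absurd h'.1 (h.2 n' ((n - n' - 2) / 2) (by omega))

end AmnesiacAux

open AmnesiacAux in
/-- Corollary 4.6: if, during standard amnesiac flooding of a single message,
a node `g` is a sink node in round `i₀` (every neighbour sends to it in round
`i₀`) and, deviating from the standard rule, `g` sends to all of its
neighbours in round `i₀ + 1` while every other node follows the standard
rule, then the resulting flooding process still terminates. -/
theorem flooding_with_sink_reversal_terminates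
    {V : Type*} [Fintype V] (G : SimpleGraph V)
    (I : Set V) (hI : I.Nonempty)
    (g : V) (i₀ : ℕ) (hi₀ : 1 ≤ i₀)
    (S' : ℕ → V → V → Prop)
    (hS'0 : ∀ a b : V, ¬ S' 0 a b)
    (hS'1 : ∀ a b : V, S' 1 a b ↔ a ∈ I ∧ G.Adj a b)
    (hS' : ∀ i : ℕ, 1 ≤ i → ∀ a b : V, ¬ (i = i₀ ∧ a = g) →
      (S' (i + 1) a b ↔ G.Adj a b ∧ (∃ h, S' i h a) ∧ ¬ S' i b a))
    (hsink : ∀ b : V, G.Adj g b → S' i₀ b g)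
    (hmod : ∀ b : V, S' (i₀ + 1) g b ↔ G.Adj g b) :
    ∃ J : ℕ, ∀ i : ℕ, J ≤ i → ∀ a b : V, ¬ S' i a b := by
  classical
  obtain ⟨p, rfl⟩ : ∃ p, i₀ = p + 1 := ⟨i₀ - 1, by omega⟩
  -- The exact characterisation of the modified flooding process:
  -- a sends to b in round t+1 iff a,b are adjacent and either the "old wave"
  -- (parity-BFS from I) passes from a to b at time t+1, or the "new wave"
  -- (parity-BFS from g, started at time p+1) passes from a to b at time t+1.
  have char : ∀ t : ℕ, ∀ a b : V, S' (t + 1) a b ↔ G.Adj a b ∧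
      ((mA G I t a ∧ mA G I (t + 1) b) ∨
        ∃ m, t = (p + 1) + m ∧ mB G g m a ∧ mB G g (m + 1) b) := by
    intro t
    induction t using Nat.strong_induction_on with
    | _ t ih =>
      cases t with
      | zero =>
        intro a b
        rw [hS'1 a b]
        constructor
        · rintro ⟨hIa, hadj⟩
          refine ⟨hadj, Or.inl ⟨⟨A_zero.mpr hIa, fun k j h => by omega⟩,
            ⟨A_succ.mpr ⟨a, hadj, A_zero.mpr hIa⟩, fun k j h => by omega⟩⟩⟩
        · rintro ⟨hadj, h⟩
          rcases h with ⟨h0, -⟩ | ⟨m, hm, -⟩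
          · exact ⟨A_zero.mp h0.1, hadj⟩
          · omega
      | succ s =>
        -- sink facts, available once the new wave is active
        have key : p ≤ s → ∀ x, G.Adj g x → mA G I p x ∧ mA G I (p + 1) g := by
          intro hps x hx
          have charp := ih p (by omega) x g
          have := (charp.mp (hsink x hx)).2
          rcases this with ⟨h1, h2⟩ | ⟨m, hm, -⟩
          · exact ⟨h1, h2⟩
          · omega
        have KA : ∀ n (v : V), p ≤ s → B G g n v → (∃ x, G.Adj g x) →
            A G I (p + 1 + n) v := by
          rintro n v hps hB ⟨x, hx⟩
          exact A_comp (key hps x hx).2.1 hB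
        have KB : ∀ n (v : V), p ≤ s → B G g (n + 1) v → A G I (p + n) v := by
          intro n v hps hB
          obtain ⟨x, hgx, q, hq⟩ := B_cons hB
          have h1 : A G I p x := (key hps x hgx).1.1
          have := A_extend h1 q
          rwa [hq] at this
        intro a b
        by_cases hexc : s + 1 = p + 1 ∧ a = g
        · -- the modified round: g sends to every neighbour
          obtain ⟨hsp, rfl⟩ := hexc
          have hse : s = p := by omega
          subst hse
          rw [show s + 1 + 1 = (s + 1) + 1 from rfl, hmod b]
          constructor
          · intro hadj
            refine ⟨hadj, Or.inr ⟨0, by omega,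
              ⟨B_zero.mpr rfl, fun k j h => by omega⟩,
              ⟨B_succ.mpr ⟨a, hadj, B_zero.mpr rfl⟩, fun k j h => by omega⟩⟩⟩
          · exact fun h => h.1
        · -- an ordinary round
          rw [hS' (s + 1) (by omega) a b hexc]
          have ihs := ih s (by omega)
          constructor
          · rintro ⟨hadj, ⟨h0, hrecv⟩, hnsend⟩
            refine ⟨hadj, ?_⟩
            rcases ((ihs h0 a).mp hrecv).2 with ⟨-, hA_a⟩ | ⟨m, hm, -, hB_a⟩
            · -- a received the old wave at time s+1
              left
              have hnb : ¬ mA G I s b := fun hmb =>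
                hnsend ((ihs b a).mpr ⟨hadj.symm, Or.inl ⟨hmb, hA_a⟩⟩)
              rcases mA_step hadj hA_a with h2 | ⟨r, hr, hmr⟩
              · exact ⟨hA_a, h2⟩
              · rw [show r = s by omega] at hmr
                exact absurd hmr hnb
            · -- a received the new wave at time s+1
              right
              have hnb : ¬ mB G g m b := fun hmb =>
                hnsend ((ihs b a).mpr ⟨hadj.symm, Or.inr ⟨m, hm, hmb, hB_a⟩⟩)
              rcases mB_step hadj hB_a with h2 | ⟨r, hr, hmr⟩
              · exact ⟨m + 1, by omega, hB_a, h2⟩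
              · rw [show r = m by omega] at hmr
                exact absurd hmr hnb
          · rintro ⟨hadj, hR⟩
            refine ⟨hadj, ?_, ?_⟩
            · -- a indeed received in round s+1
              rcases hR with ⟨hA_a, -⟩ | ⟨m, hm, hB_a, -⟩
              · obtain ⟨x, hx, hmx⟩ := mA_pred hA_a
                exact ⟨x, (ihs x a).mpr ⟨hx, Or.inl ⟨hmx, hA_a⟩⟩⟩
              · have hm1 : m ≠ 0 := by
                  rintro rfl
                  exact hexc ⟨by omega, B_zero.mp hB_a.1⟩
                obtain ⟨m', rfl⟩ := Nat.exists_eq_succ_of_ne_zero hm1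
                obtain ⟨x, hx, hmx⟩ := mB_pred hB_a
                exact ⟨x, (ihs x a).mpr ⟨hx, Or.inr ⟨m', by omega, hmx, hB_a⟩⟩⟩
            · -- and b did not send to a in round s+1
              intro hsend
              rcases ((ihs b a).mp hsend).2 with ⟨hA_b', hA_a'⟩ | ⟨m', hm', hB_b', hB_a'⟩
              · -- b sent the old wave to a in round s+1
                rcases hR with ⟨hA_a, hA_b⟩ | ⟨m, hm, hB_a, hB_b⟩
                · exact hA_b.2 s 0 (by omega) hA_b'.1
                · -- cross-exclusion X2
                  have hm1 : m ≠ 0 := by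
                    rintro rfl
                    exact hexc ⟨by omega, B_zero.mp hB_a.1⟩
                  obtain ⟨m'', rfl⟩ := Nat.exists_eq_succ_of_ne_zero hm1
                  have hps : p ≤ s := by omega
                  have hAc : A G I (p + m'') a := KB m'' a hps hB_a.1
                  exact hA_a'.2 (p + m'') 0 (by omega) hAc
              · -- b sent the new wave to a in round s+1
                rcases hR with ⟨hA_a, hA_b⟩ | ⟨m, hm, hB_a, hB_b⟩
                · -- cross-exclusion X1
                  have hps : p ≤ s := by omega
                  rcases Nat.eq_zero_or_pos m' with rfl | hpos
                  · have hbg : b = g := B_zero.mp hB_b'.1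
                    have hAc : A G I (p + 1 + 0) b :=
                      KA 0 b hps hB_b'.1 ⟨a, hbg ▸ hadj.symm⟩
                    exact hA_b.2 (p + 1) 0 (by omega) (by simpa using hAc)
                  · obtain ⟨m'', rfl⟩ := Nat.exists_eq_succ_of_ne_zero (show m' ≠ 0 by omega)
                    have hAc : A G I (p + m'') b := KB m'' b hps hB_b'.1
                    exact hA_b.2 (p + m'') 1 (by omega) hAc
                · have hmm : m = m' + 1 := by omega
                  subst hmm
                  exact hB_b.2 m' 0 (by omega) hB_b'.1
  -- Termination: the set of possible sending times is finite.
  set T : Set ℕ :=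
    {t | ∃ b : V, mA G I t b ∨ ∃ m, t = (p + 1) + m ∧ mB G g m b} with hT
  have hTfin : T.Finite := by
    have hsub : T ⊆ ⋃ b : V,
        ({t | mA G I t b ∧ t % 2 = 0} ∪ {t | mA G I t b ∧ t % 2 = 1} ∪
          {t | (∃ m, t = (p + 1) + m ∧ mB G g m b) ∧ t % 2 = 0} ∪
          {t | (∃ m, t = (p + 1) + m ∧ mB G g m b) ∧ t % 2 = 1}) := by
      rintro t ⟨b, hb⟩
      apply Set.mem_iUnion.mpr
      refine ⟨b, ?_⟩
      rcases hb with hb | hb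
      · rcases Nat.mod_two_eq_zero_or_one t with ht | ht
        · exact Or.inl (Or.inl (Or.inl ⟨hb, ht⟩))
        · exact Or.inl (Or.inl (Or.inr ⟨hb, ht⟩))
      · rcases Nat.mod_two_eq_zero_or_one t with ht | ht
        · exact Or.inl (Or.inr ⟨hb, ht⟩)
        · exact Or.inr ⟨hb, ht⟩
    refine Set.Finite.subset (Set.finite_iUnion fun b => ?_) hsub
    refine ((Set.Finite.union (Set.Finite.union ?_ ?_) ?_).union ?_)
    · exact Set.Subsingleton.finite fun x hx y hy =>
        mA_unique hx.1 hy.1 (hx.2.trans hy.2.symm)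
    · exact Set.Subsingleton.finite fun x hx y hy =>
        mA_unique hx.1 hy.1 (hx.2.trans hy.2.symm)
    · refine Set.Subsingleton.finite ?_
      rintro x ⟨⟨m, rfl, hm⟩, hx2⟩ y ⟨⟨m', rfl, hm'⟩, hy2⟩
      have : m = m' := mB_unique hm hm' (by omega)
      omega
    · refine Set.Subsingleton.finite ?_
      rintro x ⟨⟨m, rfl, hm⟩, hx2⟩ y ⟨⟨m', rfl, hm'⟩, hy2⟩
      have : m = m' := mB_unique hm hm' (by omega)
      omega
  obtain ⟨C, hC⟩ := hTfin.bddAbove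
  refine ⟨C + 1, fun i hi a b hS => ?_⟩
  cases i with
  | zero => exact absurd hi (by omega)
  | succ s =>
    have hmem : (s + 1) ∈ T := by
      rcases ((char s a b).mp hS).2 with ⟨-, hb⟩ | ⟨m, hm, -, hb⟩
      · exact ⟨b, Or.inl hb⟩
      · exact ⟨b, Or.inr ⟨m + 1, by omega, hb⟩⟩
    have := hC hmem
    omega
end
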